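/- arXiv:2507.17534 — 8 statements merged into one kernel-verified Lean document; each statement's English description precedes it below -/
import Mathlib

section
/- Assume MM-1, MM-2, A1 and A2. Then for every τ in the interior of Θ, the following equivalence holds: 0 belongs to ∇f(τ) + ∂g(τ) if and only if T(E_π[S̄(Z,τ)]) = τ, where ∂g denotes the convex subdifferential of g. -/
/-!
Write `s` for the mean of `S̄(·, τ)` and `h θ = ψ θ - ⟪s, φ θ⟫`. By MM-1, `f - h` has a
local maximum at the interior point `τ`, so `∇f(τ) = ∇h(τ)`. As `h` is convex and
differentiable at `τ`, `-∇h(τ) ∈ ∂g(τ)` is exactly the first-order condition for `τ` to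
minimize `g + h`, and by MM-2 the unique minimizer of `g + h` is `T s`.
-/

open MeasureTheory Set
open scoped RealInnerProductSpace Pointwise

def subdiff {E : Type*} [NormedAddCommGroup E] [InnerProductSpace ℝ E]
    (g : E → EReal) (x : E) : Set E :=
  {u | ∀ y, g x + ((⟪u, y - x⟫ : ℝ) : EReal) ≤ g y}

open Filter Topology

section NormedSpace

variable {E : Type*} [NormedAddCommGroup E] [NormedSpace ℝ E] {h : E → ℝ} {x : E}

theorem DifferentiableAt.hasDerivAt_comp_lineMap (hd : DifferentiableAt ℝ h x) (y : E) :
    HasDerivAt (h ∘ AffineMap.lineMap x y) (fderiv ℝ h x (y - x)) (0 : ℝ) :=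
  hd.hasFDerivAt.comp_hasDerivAt_of_eq (0 : ℝ) AffineMap.hasDerivAt_lineMap (by simp)

theorem ConvexOn.fderiv_apply_sub_le (hconv : ConvexOn ℝ univ h) (hd : DifferentiableAt ℝ h x)
    (y : E) : fderiv ℝ h x (y - x) ≤ h y - h x := by
  simpa [slope_def_field] using
    (hconv.comp_affineMap (AffineMap.lineMap x y)).le_slope_of_hasDerivAt
      trivial trivial zero_lt_one (hd.hasDerivAt_comp_lineMap y)

end NormedSpace

section InnerProductSpace

variable {E : Type*} [NormedAddCommGroup E] [InnerProductSpace ℝ E] [CompleteSpace E]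
  {g : E → EReal} {h : E → ℝ} {x : E}

theorem gradient_eq_of_isLocalMax_sub {f : E → ℝ} (hmax : IsLocalMax (fun y => f y - h y) x)
    (hf : DifferentiableAt ℝ f x) (hd : DifferentiableAt ℝ h x) :
    gradient f x = gradient h x := by
  have h0 := hmax.fderiv_eq_zero
  rw [fderiv_fun_sub hf hd, sub_eq_zero] at h0
  simp only [gradient, h0]

theorem forall_le_of_neg_gradient_mem_subdiff (hconv : ConvexOn ℝ univ h)
    (hd : DifferentiableAt ℝ h x) (hsub : -gradient h x ∈ subdiff g x) (y : E) :
    g x + (h x : EReal) ≤ g y + (h y : EReal) := by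
  have htan : h x ≤ ⟪-gradient h x, y - x⟫ + h y := by
    rw [inner_neg_left, inner_gradient_left]
    linarith [hconv.fderiv_apply_sub_le hd y]
  calc g x + (h x : EReal) ≤ g x + ((⟪-gradient h x, y - x⟫ + h y : ℝ) : EReal) := by gcongr
    _ = g x + (⟪-gradient h x, y - x⟫ : EReal) + (h y : EReal) := by
      rw [EReal.coe_add, add_assoc]
    _ ≤ g y + (h y : EReal) := by gcongr; exact hsub y

theorem neg_gradient_mem_subdiff_of_forall_le (hg_ne_bot : ∀ y, g y ≠ ⊥)
    (hg_convex : ∀ y z : E, ∀ a b : ℝ, 0 ≤ a → 0 ≤ b → a + b = 1 →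
      g (a • y + b • z) ≤ (a : EReal) * g y + (b : EReal) * g z)
    (hgx : g x ≠ ⊤) (hd : DifferentiableAt ℝ h x)
    (hmin : ∀ y, g x + (h x : EReal) ≤ g y + (h y : EReal)) :
    -gradient h x ∈ subdiff g x := by
  intro y
  rcases eq_or_ne (g y) ⊤ with hgy | hgy
  · simp [hgy]
  obtain ⟨r, hr⟩ : ∃ r : ℝ, (r : EReal) = g x := ⟨_, EReal.coe_toReal hgx (hg_ne_bot x)⟩
  obtain ⟨r', hr'⟩ : ∃ r' : ℝ, (r' : EReal) = g y :=
    ⟨_, EReal.coe_toReal hgy (hg_ne_bot y)⟩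
  -- convexity of `g` on `[x, y]` bounds the difference quotients of `h` along it from below
  have hslope : ∀ t ∈ Ioc (0 : ℝ) 1, r - r' ≤ slope (h ∘ AffineMap.lineMap x y) 0 t := by
    intro t ⟨ht0, ht1⟩
    have hseg : g x + (h x : EReal) ≤ ((1 - t : ℝ) : EReal) * g x + (t : EReal) * g y
        + (h (AffineMap.lineMap x y t) : EReal) := by
      refine (hmin _).trans (add_le_add_left ?_ _)
      rw [AffineMap.lineMap_apply_module]
      exact hg_convex x y (1 - t) t (by linarith) ht0.le (by ring)
    rw [← hr, ← hr', ← EReal.coe_mul, ← EReal.coe_mul, ← EReal.coe_add, ← EReal.coe_add,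
      ← EReal.coe_add, EReal.coe_le_coe_iff] at hseg
    rw [slope_def_field, sub_zero, le_div_iff₀ ht0]
    simp only [Function.comp_apply, AffineMap.lineMap_apply_zero]
    linarith
  have hlim := ge_of_tendsto ((hd.hasDerivAt_comp_lineMap y).tendsto_slope.mono_left
    (nhdsGT_le_nhdsNE 0)) (eventually_of_mem (Ioc_mem_nhdsGT zero_lt_one) hslope)
  rw [← hr, ← hr', inner_neg_left, inner_gradient_left, ← EReal.coe_add, EReal.coe_le_coe_iff]
  linarith

theorem neg_gradient_mem_subdiff_iff_forall_le (hg_ne_bot : ∀ y, g y ≠ ⊥)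
    (hg_convex : ∀ y z : E, ∀ a b : ℝ, 0 ≤ a → 0 ≤ b → a + b = 1 →
      g (a • y + b • z) ≤ (a : EReal) * g y + (b : EReal) * g z)
    (hgx : g x ≠ ⊤) (hconv : ConvexOn ℝ univ h) (hd : DifferentiableAt ℝ h x) :
    -gradient h x ∈ subdiff g x ↔ ∀ y, g x + (h x : EReal) ≤ g y + (h y : EReal) :=
  ⟨forall_le_of_neg_gradient_mem_subdiff hconv hd,
    neg_gradient_mem_subdiff_of_forall_le hg_ne_bot hg_convex hgx hd⟩

end InnerProductSpace

theorem zero_in_subdiff_iff_fixed_point_general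
    {d q p : ℕ}
    (Θ : Set (EuclideanSpace ℝ (Fin d)))
    (Sset : Set (EuclideanSpace ℝ (Fin q)))
    (g : EuclideanSpace ℝ (Fin d) → EReal)
    (ψ : EuclideanSpace ℝ (Fin d) → ℝ)
    (φ : EuclideanSpace ℝ (Fin d) → EuclideanSpace ℝ (Fin q))
    (π : Measure (EuclideanSpace ℝ (Fin p)))
    (f : EuclideanSpace ℝ (Fin d) → ℝ)
    (barS : EuclideanSpace ℝ (Fin p) → EuclideanSpace ℝ (Fin d) → EuclideanSpace ℝ (Fin q))
    (T : EuclideanSpace ℝ (Fin q) → EuclideanSpace ℝ (Fin d))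
    -- g is proper (never −∞, finite somewhere), lower semicontinuous, convex, with domain Θ
    (hg_ne_bot : ∀ x, g x ≠ ⊥)
    (hg_convex : ∀ x y : EuclideanSpace ℝ (Fin d), ∀ a b : ℝ, 0 ≤ a → 0 ≤ b → a + b = 1 →
      g (a • x + b • y) ≤ (a : EReal) * g x + (b : EReal) * g y)
    (hΘ : Θ = {x | g x ≠ ⊤})
    -- MM-1: S̄ is measurable, S-valued and integrable, with mean in S, and the surrogate
    -- majorizes f tangentially
    (hmean_mem : ∀ τ ∈ Θ, (∫ z, barS z τ ∂π) ∈ Sset)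
    (hMM1 : ∀ τ ∈ Θ, ∀ θ ∈ Θ,
      f θ ≤ f τ + ψ θ - ψ τ - ⟪∫ z, barS z τ ∂π, φ θ - φ τ⟫)
    -- MM-2: T s is the unique minimizer over ℝ^d of θ ↦ g(θ) + ψ(θ) − ⟨s, φ(θ)⟩,
    -- T maps S into Θ and is measurable
    (hT_min : ∀ s ∈ Sset, ∀ θ : EuclideanSpace ℝ (Fin d),
      g (T s) + ((ψ (T s) - ⟪s, φ (T s)⟫ : ℝ) : EReal)
        ≤ g θ + ((ψ θ - ⟪s, φ θ⟫ : ℝ) : EReal))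
    (hT_unique : ∀ s ∈ Sset, ∀ θ₀ : EuclideanSpace ℝ (Fin d),
      (∀ θ : EuclideanSpace ℝ (Fin d),
        g θ₀ + ((ψ θ₀ - ⟪s, φ θ₀⟫ : ℝ) : EReal)
          ≤ g θ + ((ψ θ - ⟪s, φ θ⟫ : ℝ) : EReal)) → θ₀ = T s)
    -- A1: convexity of the smooth part of the surrogate; regularity of ψ, φ
    (hA1_convex : ∀ s ∈ Sset, ConvexOn ℝ Set.univ (fun θ => ψ θ - ⟪s, φ θ⟫))
    (hψ_C1 : ContDiffOn ℝ 1 ψ (interior Θ))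
    (hφ_C1 : ContDiffOn ℝ 1 φ (interior Θ))
    -- A2: f is C¹ on the interior of Θ
    (hf_C1 : ContDiffOn ℝ 1 f (interior Θ)) :
    ∀ τ ∈ interior Θ,
      ((0 : EuclideanSpace ℝ (Fin d)) ∈ gradient f τ +ᵥ subdiff g τ)
        ↔ T (∫ z, barS z τ ∂π) = τ := by
  intro τ hτ
  have hτΘ : τ ∈ Θ := interior_subset hτ
  set s := ∫ z, barS z τ ∂π
  have hsS : s ∈ Sset := hmean_mem τ hτΘ
  set h := fun θ => ψ θ - ⟪s, φ θ⟫
  have hτ_nhds : interior Θ ∈ 𝓝 τ := isOpen_interior.mem_nhds hτ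
  have hfd := (hf_C1.differentiableOn one_ne_zero).differentiableAt hτ_nhds
  have hhd : DifferentiableAt ℝ h τ :=
    ((hψ_C1.differentiableOn one_ne_zero).differentiableAt hτ_nhds).sub
      ((differentiableAt_const s).inner ℝ
        ((hφ_C1.differentiableOn one_ne_zero).differentiableAt hτ_nhds))
  have hmax : IsLocalMax (fun θ => f θ - h θ) τ := by
    filter_upwards [hτ_nhds] with θ hθ
    have hmaj := hMM1 τ hτΘ θ (interior_subset hθ)
    rw [inner_sub_right] at hmaj
    simp only [h]
    linarith
  have hgτ : g τ ≠ ⊤ := by rwa [hΘ] at hτΘ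
  rw [mem_vadd_set_iff_neg_vadd_mem, vadd_eq_add, add_zero,
    gradient_eq_of_isLocalMax_sub hmax hfd hhd,
    neg_gradient_mem_subdiff_iff_forall_le hg_ne_bot hg_convex hgτ (hA1_convex s hsS) hhd]
  exact ⟨fun hmin => (hT_unique s hsS τ hmin).symm, fun hTs => hTs ▸ hT_min s hsS⟩

/-- Assume MM-1, MM-2, A1 and A2. Then for every `τ` in the interior of
`Θ`, `0 ∈ ∇f(τ) + ∂g(τ)` if and only if `T (E_π[S̄(Z,τ)]) = τ`. -/
theorem zero_in_subdiff_iff_fixed_point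
    {d q p : ℕ}
    (Θ : Set (EuclideanSpace ℝ (Fin d)))
    (Sset : Set (EuclideanSpace ℝ (Fin q)))
    (g : EuclideanSpace ℝ (Fin d) → EReal)
    (ψ : EuclideanSpace ℝ (Fin d) → ℝ)
    (φ : EuclideanSpace ℝ (Fin d) → EuclideanSpace ℝ (Fin q))
    (π : Measure (EuclideanSpace ℝ (Fin p))) [IsProbabilityMeasure π]
    (ℓ : EuclideanSpace ℝ (Fin p) → EuclideanSpace ℝ (Fin d) → ℝ)
    (f : EuclideanSpace ℝ (Fin d) → ℝ)
    (barS : EuclideanSpace ℝ (Fin p) → EuclideanSpace ℝ (Fin d) → EuclideanSpace ℝ (Fin q))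
    (T : EuclideanSpace ℝ (Fin q) → EuclideanSpace ℝ (Fin d))
    -- g is proper (never −∞, finite somewhere), lower semicontinuous, convex, with domain Θ
    (hg_ne_bot : ∀ x, g x ≠ ⊥)
    (hg_proper : ∃ x, g x ≠ ⊤)
    (hg_lsc : LowerSemicontinuous g)
    (hg_convex : ∀ x y : EuclideanSpace ℝ (Fin d), ∀ a b : ℝ, 0 ≤ a → 0 ≤ b → a + b = 1 →
      g (a • x + b • y) ≤ (a : EReal) * g x + (b : EReal) * g y)
    (hΘ : Θ = {x | g x ≠ ⊤})
    -- S is a convex subset of ℝ^q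
    (hS_convex : Convex ℝ Sset)
    -- the objective f(θ) = E_π[ℓ(Z,θ)], with ℓ measurable and π-integrable
    (hℓ_meas : Measurable (Function.uncurry ℓ))
    (hℓ_int : ∀ θ ∈ Θ, Integrable (fun z => ℓ z θ) π)
    (hf : ∀ θ, f θ = ∫ z, ℓ z θ ∂π)
    -- MM-1: S̄ is measurable, S-valued and integrable, with mean in S, and the surrogate
    -- majorizes f tangentially
    (hbarS_meas : Measurable (Function.uncurry barS))
    (hbarS_mem : ∀ z, ∀ τ ∈ Θ, barS z τ ∈ Sset)
    (hbarS_int : ∀ τ ∈ Θ, Integrable (fun z => barS z τ) π)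
    (hmean_mem : ∀ τ ∈ Θ, (∫ z, barS z τ ∂π) ∈ Sset)
    (hMM1 : ∀ τ ∈ Θ, ∀ θ ∈ Θ,
      f θ ≤ f τ + ψ θ - ψ τ - ⟪∫ z, barS z τ ∂π, φ θ - φ τ⟫)
    -- MM-2: T s is the unique minimizer over ℝ^d of θ ↦ g(θ) + ψ(θ) − ⟨s, φ(θ)⟩,
    -- T maps S into Θ and is measurable
    (hT_mem : ∀ s ∈ Sset, T s ∈ Θ)
    (hT_min : ∀ s ∈ Sset, ∀ θ : EuclideanSpace ℝ (Fin d),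
      g (T s) + ((ψ (T s) - ⟪s, φ (T s)⟫ : ℝ) : EReal)
        ≤ g θ + ((ψ θ - ⟪s, φ θ⟫ : ℝ) : EReal))
    (hT_unique : ∀ s ∈ Sset, ∀ θ₀ : EuclideanSpace ℝ (Fin d),
      (∀ θ : EuclideanSpace ℝ (Fin d),
        g θ₀ + ((ψ θ₀ - ⟪s, φ θ₀⟫ : ℝ) : EReal)
          ≤ g θ + ((ψ θ - ⟪s, φ θ⟫ : ℝ) : EReal)) → θ₀ = T s)
    (hT_meas : Measurable T)
    -- A1: convexity of the smooth part of the surrogate; regularity of ψ, φ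
    (hA1_convex : ∀ s ∈ Sset, ConvexOn ℝ Set.univ (fun θ => ψ θ - ⟪s, φ θ⟫))
    (hint_ne : (interior Θ).Nonempty)
    (hψ_C1 : ContDiffOn ℝ 1 ψ (interior Θ))
    (hφ_C1 : ContDiffOn ℝ 1 φ (interior Θ))
    -- A2: f is C¹ on the interior of Θ
    (hf_C1 : ContDiffOn ℝ 1 f (interior Θ)) :
    ∀ τ ∈ interior Θ,
      ((0 : EuclideanSpace ℝ (Fin d)) ∈ gradient f τ +ᵥ subdiff g τ)
        ↔ T (∫ z, barS z τ ∂π) = τ :=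
  zero_in_subdiff_iff_fixed_point_general Θ Sset g ψ φ π f barS T hg_ne_bot hg_convex hΘ hmean_mem
    hMM1 hT_min hT_unique hA1_convex hψ_C1 hφ_C1 hf_C1
end

section
/- Assume MM-1, MM-2, A1 and A2. Then for every s ∈ S such that T(s) lies in the interior of Θ, the vector −(Dφ(T(s)))* h(s) belongs to ∇f(T(s)) + ∂g(T(s)); here (Dφ(θ))* v denotes the gradient at θ of the map θ' ↦ ⟨v, φ(θ')⟩ (i.e. the transposed Jacobian of φ at θ applied to v ∈ ℝ^q), and ∂g denotes the convex subdifferential of g. -/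
/-!
At `x = T s`, the tangent majorization MM-1 makes `θ ↦ ψ θ - ⟪m, φ θ⟫ - f θ` (with
`m = E_π[S̄(Z, x)]`) locally minimal at the interior point `x`, so `∇f x = ∇ψ x - ∇⟪m, φ⟫ x`.
Since `x` minimizes `g + (ψ - ⟪s, φ⟫)`, comparing it, by convexity of `g`, with the points of
the segment towards any `y` and letting them tend to `x` gives `-(∇ψ x - ∇⟪s, φ⟫ x) ∈ ∂g x`.
The two gradients add up to `-∇⟪m - s, φ⟫ x`.
-/

open MeasureTheory Set
open scoped RealInnerProductSpace Pointwise

open Filter Topology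

section Gradient

variable {E : Type*} [NormedAddCommGroup E] [InnerProductSpace ℝ E] [CompleteSpace E]
  {u v : E → ℝ} {x : E}

theorem gradient_sub (hu : DifferentiableAt ℝ u x) (hv : DifferentiableAt ℝ v x) :
    gradient (u - v) x = gradient u x - gradient v x := by
  simp only [gradient, fderiv_sub hu hv, map_sub]

theorem gradient_eq_of_isLocalMin_sub (hu : DifferentiableAt ℝ u x)
    (hv : DifferentiableAt ℝ v x) (hmin : IsLocalMin (u - v) x) :
    gradient v x = gradient u x := by
  have hfderiv : fderiv ℝ u x - fderiv ℝ v x = 0 := by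
    rw [← fderiv_sub hu hv]
    exact hmin.fderiv_eq_zero
  simp only [gradient, (sub_eq_zero.mp hfderiv).symm]

end Gradient

theorem HasLineDerivAt.ge_of_forall_mul_le_sub {E : Type*} [NormedAddCommGroup E]
    [NormedSpace ℝ E] {F : E → ℝ} {F' c : ℝ} {x v : E} (hF : HasLineDerivAt ℝ F F' x v)
    (h : ∀ t ∈ Ioo (0 : ℝ) 1, t * c ≤ F (x + t • v) - F x) : c ≤ F' := by
  refine ge_of_tendsto hF.tendsto_slope_zero_right ?_
  filter_upwards [Ioo_mem_nhdsGT one_pos] with t ht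
  rw [smul_eq_mul, le_inv_mul_iff₀ ht.1]
  exact h t ht

theorem neg_gradient_mem_subdiff_of_forall_le_add {E : Type*} [NormedAddCommGroup E]
    [InnerProductSpace ℝ E] [CompleteSpace E] {g : E → EReal} {F : E → ℝ} {x : E}
    (hg_ne_bot : ∀ y, g y ≠ ⊥) (hgx : g x ≠ ⊤)
    (hg_convex : ∀ y z : E, ∀ a b : ℝ, 0 ≤ a → 0 ≤ b → a + b = 1 →
      g (a • y + b • z) ≤ (a : EReal) * g y + (b : EReal) * g z)
    (hF : DifferentiableAt ℝ F x) (hmin : ∀ y, g x + (F x : EReal) ≤ g y + (F y : EReal)) :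
    -gradient F x ∈ subdiff g x := by
  intro y
  obtain ⟨gx, hgx⟩ : ∃ r : ℝ, g x = r := ⟨_, (EReal.coe_toReal hgx (hg_ne_bot x)).symm⟩
  rcases eq_or_ne (g y) ⊤ with hgy | hgy
  · simp [hgy]
  obtain ⟨gy, hgy⟩ : ∃ r : ℝ, g y = r := ⟨_, (EReal.coe_toReal hgy (hg_ne_bot y)).symm⟩
  have hsegment : ∀ t ∈ Ioo (0 : ℝ) 1, t * (gx - gy) ≤ F (x + t • (y - x)) - F x := by
    intro t ht
    have hconv := hg_convex x y (1 - t) t (by linarith [ht.2]) ht.1.le (by ring)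
    have hpoint : (1 - t) • x + t • y = x + t • (y - x) := by
      rw [smul_sub, sub_smul, one_smul]; abel
    rw [hpoint] at hconv
    have hle := (hmin _).trans (add_le_add_left hconv (F (x + t • (y - x)) : EReal))
    rw [hgx, hgy] at hle
    norm_cast at hle
    linarith
  have hslope := (hF.hasGradientAt.hasFDerivAt.hasLineDerivAt (y - x)).ge_of_forall_mul_le_sub
    hsegment
  rw [InnerProductSpace.toDual_apply_apply] at hslope
  rw [hgx, hgy, inner_neg_left]
  exact_mod_cast (by linarith : gx + -⟪gradient F x, y - x⟫ ≤ gy)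

theorem mean_field_gives_subgradient_general
    {d q p : ℕ}
    (Θ : Set (EuclideanSpace ℝ (Fin d)))
    (Sset : Set (EuclideanSpace ℝ (Fin q)))
    (g : EuclideanSpace ℝ (Fin d) → EReal)
    (ψ : EuclideanSpace ℝ (Fin d) → ℝ)
    (φ : EuclideanSpace ℝ (Fin d) → EuclideanSpace ℝ (Fin q))
    (π : Measure (EuclideanSpace ℝ (Fin p)))
    (f : EuclideanSpace ℝ (Fin d) → ℝ)
    (barS : EuclideanSpace ℝ (Fin p) → EuclideanSpace ℝ (Fin d) → EuclideanSpace ℝ (Fin q))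
    (T : EuclideanSpace ℝ (Fin q) → EuclideanSpace ℝ (Fin d))
    -- g is proper (never −∞, finite somewhere), lower semicontinuous, convex, with domain Θ
    (hg_ne_bot : ∀ x, g x ≠ ⊥)
    (hg_convex : ∀ x y : EuclideanSpace ℝ (Fin d), ∀ a b : ℝ, 0 ≤ a → 0 ≤ b → a + b = 1 →
      g (a • x + b • y) ≤ (a : EReal) * g x + (b : EReal) * g y)
    (hΘ : Θ = {x | g x ≠ ⊤})
    -- MM-1: S̄ is measurable, S-valued and integrable, with mean in S, and the surrogate
    -- majorizes f tangentially
    (hMM1 : ∀ τ ∈ Θ, ∀ θ ∈ Θ,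
      f θ ≤ f τ + ψ θ - ψ τ - ⟪∫ z, barS z τ ∂π, φ θ - φ τ⟫)
    -- MM-2: T s is the unique minimizer over ℝ^d of θ ↦ g(θ) + ψ(θ) − ⟨s, φ(θ)⟩,
    -- T maps S into Θ and is measurable
    (hT_min : ∀ s ∈ Sset, ∀ θ : EuclideanSpace ℝ (Fin d),
      g (T s) + ((ψ (T s) - ⟪s, φ (T s)⟫ : ℝ) : EReal)
        ≤ g θ + ((ψ θ - ⟪s, φ θ⟫ : ℝ) : EReal))
    -- A1: convexity of the smooth part of the surrogate; regularity of ψ, φ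
    (hψ_C1 : ContDiffOn ℝ 1 ψ (interior Θ))
    (hφ_C1 : ContDiffOn ℝ 1 φ (interior Θ))
    -- A2: f is C¹ on the interior of Θ
    (hf_C1 : ContDiffOn ℝ 1 f (interior Θ)) :
    ∀ s ∈ Sset, T s ∈ interior Θ →
      -(gradient (fun θ' => ⟪(∫ z, barS z (T s) ∂π) - s, φ θ'⟫) (T s))
        ∈ gradient f (T s) +ᵥ subdiff g (T s) := by
  intro s hs hx
  set x := T s
  set m := ∫ z, barS z x ∂π
  let u : EuclideanSpace ℝ (Fin q) → EuclideanSpace ℝ (Fin d) → ℝ := fun v θ => ψ θ - ⟪v, φ θ⟫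
  have hnhds : interior Θ ∈ 𝓝 x := isOpen_interior.mem_nhds hx
  have hφ : DifferentiableAt ℝ φ x := (hφ_C1.differentiableOn one_ne_zero).differentiableAt hnhds
  have hu (v) : DifferentiableAt ℝ (u v) x :=
    ((hψ_C1.differentiableOn one_ne_zero).differentiableAt hnhds).sub
      ((differentiableAt_const v).inner ℝ hφ)
  have hf : DifferentiableAt ℝ f x := (hf_C1.differentiableOn one_ne_zero).differentiableAt hnhds
  have hmin : IsLocalMin (u m - f) x := eventually_of_mem hnhds fun θ hθ => by
    have hmaj := hMM1 x (interior_subset hx) θ (interior_subset hθ)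
    rw [inner_sub_right] at hmaj
    simp only [u, Pi.sub_apply]
    linarith
  have hgrad_f : gradient f x = gradient (u m) x := gradient_eq_of_isLocalMin_sub (hu m) hf hmin
  have hgx : g x ≠ ⊤ := by simpa [hΘ] using interior_subset hx
  have hsubgrad : -gradient (u s) x ∈ subdiff g x :=
    neg_gradient_mem_subdiff_of_forall_le_add hg_ne_bot hgx hg_convex (hu s) (hT_min s hs)
  have hsplit : (fun θ' => ⟪m - s, φ θ'⟫) = u s - u m := by
    funext θ
    simp only [u, Pi.sub_apply, inner_sub_left]
    ring
  rw [hsplit, gradient_sub (hu s) (hu m), hgrad_f]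
  exact ⟨_, hsubgrad, by simp only [vadd_eq_add]; abel⟩

/-- Assume MM-1, MM-2, A1 and A2. For every `s ∈ S` with `T s` in the
interior of `Θ`, the vector `−(Dφ(T s))* h(s)` belongs to `∇f(T s) + ∂g(T s)`, where
`h(s) := E_π[S̄(Z, T s)] − s` is the mean field and `(Dφ(θ))* v` is the gradient at `θ`
of `θ' ↦ ⟨v, φ(θ')⟩`. -/
theorem mean_field_gives_subgradient
    {d q p : ℕ}
    (Θ : Set (EuclideanSpace ℝ (Fin d)))
    (Sset : Set (EuclideanSpace ℝ (Fin q)))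
    (g : EuclideanSpace ℝ (Fin d) → EReal)
    (ψ : EuclideanSpace ℝ (Fin d) → ℝ)
    (φ : EuclideanSpace ℝ (Fin d) → EuclideanSpace ℝ (Fin q))
    (π : Measure (EuclideanSpace ℝ (Fin p))) [IsProbabilityMeasure π]
    (ℓ : EuclideanSpace ℝ (Fin p) → EuclideanSpace ℝ (Fin d) → ℝ)
    (f : EuclideanSpace ℝ (Fin d) → ℝ)
    (barS : EuclideanSpace ℝ (Fin p) → EuclideanSpace ℝ (Fin d) → EuclideanSpace ℝ (Fin q))
    (T : EuclideanSpace ℝ (Fin q) → EuclideanSpace ℝ (Fin d))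
    -- g is proper (never −∞, finite somewhere), lower semicontinuous, convex, with domain Θ
    (hg_ne_bot : ∀ x, g x ≠ ⊥)
    (hg_proper : ∃ x, g x ≠ ⊤)
    (hg_lsc : LowerSemicontinuous g)
    (hg_convex : ∀ x y : EuclideanSpace ℝ (Fin d), ∀ a b : ℝ, 0 ≤ a → 0 ≤ b → a + b = 1 →
      g (a • x + b • y) ≤ (a : EReal) * g x + (b : EReal) * g y)
    (hΘ : Θ = {x | g x ≠ ⊤})
    -- S is a convex subset of ℝ^q
    (hS_convex : Convex ℝ Sset)
    -- the objective f(θ) = E_π[ℓ(Z,θ)], with ℓ measurable and π-integrable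
    (hℓ_meas : Measurable (Function.uncurry ℓ))
    (hℓ_int : ∀ θ ∈ Θ, Integrable (fun z => ℓ z θ) π)
    (hf : ∀ θ, f θ = ∫ z, ℓ z θ ∂π)
    -- MM-1: S̄ is measurable, S-valued and integrable, with mean in S, and the surrogate
    -- majorizes f tangentially
    (hbarS_meas : Measurable (Function.uncurry barS))
    (hbarS_mem : ∀ z, ∀ τ ∈ Θ, barS z τ ∈ Sset)
    (hbarS_int : ∀ τ ∈ Θ, Integrable (fun z => barS z τ) π)
    (hmean_mem : ∀ τ ∈ Θ, (∫ z, barS z τ ∂π) ∈ Sset)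
    (hMM1 : ∀ τ ∈ Θ, ∀ θ ∈ Θ,
      f θ ≤ f τ + ψ θ - ψ τ - ⟪∫ z, barS z τ ∂π, φ θ - φ τ⟫)
    -- MM-2: T s is the unique minimizer over ℝ^d of θ ↦ g(θ) + ψ(θ) − ⟨s, φ(θ)⟩,
    -- T maps S into Θ and is measurable
    (hT_mem : ∀ s ∈ Sset, T s ∈ Θ)
    (hT_min : ∀ s ∈ Sset, ∀ θ : EuclideanSpace ℝ (Fin d),
      g (T s) + ((ψ (T s) - ⟪s, φ (T s)⟫ : ℝ) : EReal)
        ≤ g θ + ((ψ θ - ⟪s, φ θ⟫ : ℝ) : EReal))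
    (hT_unique : ∀ s ∈ Sset, ∀ θ₀ : EuclideanSpace ℝ (Fin d),
      (∀ θ : EuclideanSpace ℝ (Fin d),
        g θ₀ + ((ψ θ₀ - ⟪s, φ θ₀⟫ : ℝ) : EReal)
          ≤ g θ + ((ψ θ - ⟪s, φ θ⟫ : ℝ) : EReal)) → θ₀ = T s)
    (hT_meas : Measurable T)
    -- A1: convexity of the smooth part of the surrogate; regularity of ψ, φ
    (hA1_convex : ∀ s ∈ Sset, ConvexOn ℝ Set.univ (fun θ => ψ θ - ⟪s, φ θ⟫))
    (hint_ne : (interior Θ).Nonempty)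
    (hψ_C1 : ContDiffOn ℝ 1 ψ (interior Θ))
    (hφ_C1 : ContDiffOn ℝ 1 φ (interior Θ))
    -- A2: f is C¹ on the interior of Θ
    (hf_C1 : ContDiffOn ℝ 1 f (interior Θ)) :
    ∀ s ∈ Sset, T s ∈ interior Θ →
      -(gradient (fun θ' => ⟪(∫ z, barS z (T s) ∂π) - s, φ θ'⟫) (T s))
        ∈ gradient f (T s) +ᵥ subdiff g (T s) :=
  mean_field_gives_subgradient_general Θ Sset g ψ φ π f barS T hg_ne_bot hg_convex hΘ hMM1 hT_min
    hψ_C1 hφ_C1 hf_C1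
end

section
/- Assume MM-1, A1 and A2. Then for every τ in the interior of Θ, the first-order tangency identity ∇f(τ) − ∇ψ(τ) + (Dφ(τ))* E_π[S̄(Z,τ)] = 0 holds; here (Dφ(τ))* v denotes the gradient at τ of the map θ ↦ ⟨v, φ(θ)⟩ (i.e. the transposed Jacobian of φ at τ applied to v ∈ ℝ^q). -/
open MeasureTheory Set
open scoped RealInnerProductSpace

/-!
A majorizing surrogate `θ ↦ f τ + h θ - h τ`, with `h = ψ - ⟪E_π S̄(Z,τ), φ ·⟫`, touches `f`
at `τ`, so `f - h` has a local maximum at the interior point `τ`; the gradients of `f` and `h`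
therefore agree there.
-/

section Gradient

variable {F : Type*} [NormedAddCommGroup F] [InnerProductSpace ℝ F] [CompleteSpace F]
  {f g : F → ℝ} {x : F}

theorem gradient_sub_s3 (hf : DifferentiableAt ℝ f x) (hg : DifferentiableAt ℝ g x) :
    gradient (f - g) x = gradient f x - gradient g x := by
  simp only [gradient, fderiv_sub hf hg, map_sub]

theorem IsLocalMax.gradient_eq_zero (h : IsLocalMax f x) : gradient f x = 0 := by
  simp [gradient, h.fderiv_eq_zero]

theorem gradient_eq_of_eventually_le_add_sub (hf : DifferentiableAt ℝ f x)
    (hg : DifferentiableAt ℝ g x) (hmaj : ∀ᶠ y in nhds x, f y ≤ f x + g y - g x) :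
    gradient f x = gradient g x := by
  have hmax : IsLocalMax (fun y => f y - g y) x :=
    hmaj.mono fun y hy => by linarith
  rw [← sub_eq_zero, ← gradient_sub_s3 hf hg]
  exact hmax.gradient_eq_zero

end Gradient

theorem surrogate_tangency_identity_general
    {d q p : ℕ}
    (Θ : Set (EuclideanSpace ℝ (Fin d)))
    (ψ : EuclideanSpace ℝ (Fin d) → ℝ)
    (φ : EuclideanSpace ℝ (Fin d) → EuclideanSpace ℝ (Fin q))
    (π : Measure (EuclideanSpace ℝ (Fin p)))
    (f : EuclideanSpace ℝ (Fin d) → ℝ)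
    (barS : EuclideanSpace ℝ (Fin p) → EuclideanSpace ℝ (Fin d) → EuclideanSpace ℝ (Fin q))
    -- MM-1: S̄ is measurable, S-valued and integrable, with mean in S, and the surrogate
    -- majorizes f tangentially
    (hMM1 : ∀ τ ∈ Θ, ∀ θ ∈ Θ,
      f θ ≤ f τ + ψ θ - ψ τ - ⟪∫ z, barS z τ ∂π, φ θ - φ τ⟫)
    -- A1: convexity of the smooth part of the surrogate; regularity of ψ, φ
    (hψ_C1 : ContDiffOn ℝ 1 ψ (interior Θ))
    (hφ_C1 : ContDiffOn ℝ 1 φ (interior Θ))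
    -- A2: f is C¹ on the interior of Θ
    (hf_C1 : ContDiffOn ℝ 1 f (interior Θ)) :
    ∀ τ ∈ interior Θ,
      gradient f τ - gradient ψ τ
        + gradient (fun θ => ⟪∫ z, barS z τ ∂π, φ θ⟫) τ = 0 := by
  intro τ hτ
  set s := ∫ z, barS z τ ∂π
  have hnhds : interior Θ ∈ nhds τ := isOpen_interior.mem_nhds hτ
  have hf : DifferentiableAt ℝ f τ := (hf_C1.differentiableOn one_ne_zero).differentiableAt hnhds
  have hψ : DifferentiableAt ℝ ψ τ := (hψ_C1.differentiableOn one_ne_zero).differentiableAt hnhds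
  have hφ : DifferentiableAt ℝ φ τ := (hφ_C1.differentiableOn one_ne_zero).differentiableAt hnhds
  have hsφ : DifferentiableAt ℝ (fun θ => ⟪s, φ θ⟫) τ := (differentiableAt_const s).inner ℝ hφ
  have hmaj : ∀ᶠ θ in nhds τ, f θ ≤ f τ + (ψ θ - ⟪s, φ θ⟫) - (ψ τ - ⟪s, φ τ⟫) := by
    filter_upwards [hnhds] with θ hθ
    have := hMM1 τ (interior_subset hτ) θ (interior_subset hθ)
    rw [inner_sub_right] at this
    linarith
  rw [gradient_eq_of_eventually_le_add_sub hf (hψ.sub hsφ) hmaj, gradient_sub_s3 hψ hsφ]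
  abel

/-- Assume MM-1, A1 and A2. Then for every `τ` in the interior of `Θ`
the first-order tangency identity `∇f(τ) − ∇ψ(τ) + (Dφ(τ))* E_π[S̄(Z,τ)] = 0` holds,
where `(Dφ(τ))* v` is the gradient at `τ` of `θ ↦ ⟨v, φ(θ)⟩`. -/
theorem surrogate_tangency_identity
    {d q p : ℕ}
    (Θ : Set (EuclideanSpace ℝ (Fin d)))
    (Sset : Set (EuclideanSpace ℝ (Fin q)))
    (ψ : EuclideanSpace ℝ (Fin d) → ℝ)
    (φ : EuclideanSpace ℝ (Fin d) → EuclideanSpace ℝ (Fin q))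
    (π : Measure (EuclideanSpace ℝ (Fin p))) [IsProbabilityMeasure π]
    (ℓ : EuclideanSpace ℝ (Fin p) → EuclideanSpace ℝ (Fin d) → ℝ)
    (f : EuclideanSpace ℝ (Fin d) → ℝ)
    (barS : EuclideanSpace ℝ (Fin p) → EuclideanSpace ℝ (Fin d) → EuclideanSpace ℝ (Fin q))
    -- S is a convex subset of ℝ^q
    (hS_convex : Convex ℝ Sset)
    -- the objective f(θ) = E_π[ℓ(Z,θ)], with ℓ measurable and π-integrable
    (hℓ_meas : Measurable (Function.uncurry ℓ))
    (hℓ_int : ∀ θ ∈ Θ, Integrable (fun z => ℓ z θ) π)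
    (hf : ∀ θ, f θ = ∫ z, ℓ z θ ∂π)
    -- MM-1: S̄ is measurable, S-valued and integrable, with mean in S, and the surrogate
    -- majorizes f tangentially
    (hbarS_meas : Measurable (Function.uncurry barS))
    (hbarS_mem : ∀ z, ∀ τ ∈ Θ, barS z τ ∈ Sset)
    (hbarS_int : ∀ τ ∈ Θ, Integrable (fun z => barS z τ) π)
    (hmean_mem : ∀ τ ∈ Θ, (∫ z, barS z τ ∂π) ∈ Sset)
    (hMM1 : ∀ τ ∈ Θ, ∀ θ ∈ Θ,
      f θ ≤ f τ + ψ θ - ψ τ - ⟪∫ z, barS z τ ∂π, φ θ - φ τ⟫)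
    -- A1: convexity of the smooth part of the surrogate; regularity of ψ, φ
    (hA1_convex : ∀ s ∈ Sset, ConvexOn ℝ Set.univ (fun θ => ψ θ - ⟪s, φ θ⟫))
    (hint_ne : (interior Θ).Nonempty)
    (hψ_C1 : ContDiffOn ℝ 1 ψ (interior Θ))
    (hφ_C1 : ContDiffOn ℝ 1 φ (interior Θ))
    -- A2: f is C¹ on the interior of Θ
    (hf_C1 : ContDiffOn ℝ 1 f (interior Θ)) :
    ∀ τ ∈ interior Θ,
      gradient f τ - gradient ψ τ
        + gradient (fun θ => ⟪∫ z, barS z τ ∂π, φ θ⟫) τ = 0 :=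
  surrogate_tangency_identity_general Θ ψ φ π f barS hMM1 hψ_C1 hφ_C1 hf_C1
end

section
/- Assume MM-1 and MM-2. Then for all s, s' ∈ S, the surrogate descent inequality holds: (f+g)(T(s')) ≤ (f+g)(T(s)) − ⟨h(s), φ(T(s')) − φ(T(s))⟩ + ⟨s' − s, φ(T(s')) − φ(T(s))⟩. -/
open MeasureTheory Set
open scoped RealInnerProductSpace

/-- Assume MM-1 and MM-2. With `h(s) := E_π[S̄(Z, T s)] − s` the mean
field, for all `s, s' ∈ S` the surrogate descent inequality holds:
`(f+g)(T s') ≤ (f+g)(T s) − ⟨h(s), φ(T s') − φ(T s)⟩ + ⟨s' − s, φ(T s') − φ(T s)⟩`. -/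
theorem surrogate_descent_inequality
    {d q p : ℕ}
    (Θ : Set (EuclideanSpace ℝ (Fin d)))
    (Sset : Set (EuclideanSpace ℝ (Fin q)))
    (g : EuclideanSpace ℝ (Fin d) → EReal)
    (ψ : EuclideanSpace ℝ (Fin d) → ℝ)
    (φ : EuclideanSpace ℝ (Fin d) → EuclideanSpace ℝ (Fin q))
    (π : Measure (EuclideanSpace ℝ (Fin p))) [IsProbabilityMeasure π]
    (ℓ : EuclideanSpace ℝ (Fin p) → EuclideanSpace ℝ (Fin d) → ℝ)
    (f : EuclideanSpace ℝ (Fin d) → ℝ)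
    (barS : EuclideanSpace ℝ (Fin p) → EuclideanSpace ℝ (Fin d) → EuclideanSpace ℝ (Fin q))
    (T : EuclideanSpace ℝ (Fin q) → EuclideanSpace ℝ (Fin d))
    -- g is proper (never −∞, finite somewhere), lower semicontinuous, convex, with domain Θ
    (hg_ne_bot : ∀ x, g x ≠ ⊥)
    (hg_proper : ∃ x, g x ≠ ⊤)
    (hg_lsc : LowerSemicontinuous g)
    (hg_convex : ∀ x y : EuclideanSpace ℝ (Fin d), ∀ a b : ℝ, 0 ≤ a → 0 ≤ b → a + b = 1 →
      g (a • x + b • y) ≤ (a : EReal) * g x + (b : EReal) * g y)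
    (hΘ : Θ = {x | g x ≠ ⊤})
    -- S is a convex subset of ℝ^q
    (hS_convex : Convex ℝ Sset)
    -- the objective f(θ) = E_π[ℓ(Z,θ)], with ℓ measurable and π-integrable
    (hℓ_meas : Measurable (Function.uncurry ℓ))
    (hℓ_int : ∀ θ ∈ Θ, Integrable (fun z => ℓ z θ) π)
    (hf : ∀ θ, f θ = ∫ z, ℓ z θ ∂π)
    -- MM-1: S̄ is measurable, S-valued and integrable, with mean in S, and the surrogate
    -- majorizes f tangentially
    (hbarS_meas : Measurable (Function.uncurry barS))
    (hbarS_mem : ∀ z, ∀ τ ∈ Θ, barS z τ ∈ Sset)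
    (hbarS_int : ∀ τ ∈ Θ, Integrable (fun z => barS z τ) π)
    (hmean_mem : ∀ τ ∈ Θ, (∫ z, barS z τ ∂π) ∈ Sset)
    (hMM1 : ∀ τ ∈ Θ, ∀ θ ∈ Θ,
      f θ ≤ f τ + ψ θ - ψ τ - ⟪∫ z, barS z τ ∂π, φ θ - φ τ⟫)
    -- MM-2: T s is the unique minimizer over ℝ^d of θ ↦ g(θ) + ψ(θ) − ⟨s, φ(θ)⟩,
    -- T maps S into Θ and is measurable
    (hT_mem : ∀ s ∈ Sset, T s ∈ Θ)
    (hT_min : ∀ s ∈ Sset, ∀ θ : EuclideanSpace ℝ (Fin d),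
      g (T s) + ((ψ (T s) - ⟪s, φ (T s)⟫ : ℝ) : EReal)
        ≤ g θ + ((ψ θ - ⟪s, φ θ⟫ : ℝ) : EReal))
    (hT_unique : ∀ s ∈ Sset, ∀ θ₀ : EuclideanSpace ℝ (Fin d),
      (∀ θ : EuclideanSpace ℝ (Fin d),
        g θ₀ + ((ψ θ₀ - ⟪s, φ θ₀⟫ : ℝ) : EReal)
          ≤ g θ + ((ψ θ - ⟪s, φ θ⟫ : ℝ) : EReal)) → θ₀ = T s)
    (hT_meas : Measurable T)
    :
    ∀ s ∈ Sset, ∀ s' ∈ Sset,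
      (f (T s') : EReal) + g (T s')
        ≤ (f (T s) : EReal) + g (T s)
          + ((-⟪(∫ z, barS z (T s) ∂π) - s, φ (T s') - φ (T s)⟫
              + ⟪s' - s, φ (T s') - φ (T s)⟫ : ℝ) : EReal) := by
  intro s hs s' hs'
  have hτ : T s ∈ Θ := hT_mem s hs
  have hθ : T s' ∈ Θ := hT_mem s' hs'
  -- g values are finite
  have hτ_top : g (T s) ≠ ⊤ := by rw [hΘ] at hτ; exact hτ
  have hθ_top : g (T s') ≠ ⊤ := by rw [hΘ] at hθ; exact hθ
  obtain ⟨a, ha⟩ : ∃ a : ℝ, g (T s) = (a : EReal) := by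
    lift g (T s) to ℝ using ⟨hτ_top, hg_ne_bot _⟩ with a; exact ⟨a, rfl⟩
  obtain ⟨b, hb⟩ : ∃ b : ℝ, g (T s') = (b : EReal) := by
    lift g (T s') to ℝ using ⟨hθ_top, hg_ne_bot _⟩ with b; exact ⟨b, rfl⟩
  -- MM-1 with τ = T s, θ = T s'
  have h1 := hMM1 (T s) hτ (T s') hθ
  -- minimality at s' with θ = T s
  have h2 := hT_min s' hs' (T s)
  rw [ha, hb] at h2 ⊢
  rw [← EReal.coe_add, ← EReal.coe_add] at h2
  rw [← EReal.coe_add, ← EReal.coe_add, ← EReal.coe_add]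
  rw [EReal.coe_le_coe_iff] at h2 ⊢
  simp only [inner_sub_left, inner_sub_right] at h1 h2 ⊢
  linarith
end

section
/- Assume MM-2. Then the composed map φ ∘ T is monotone on S: for all s, s' ∈ S, ⟨s' − s, φ(T(s')) − φ(T(s))⟩ ≥ 0. -/
open MeasureTheory Set
open scoped RealInnerProductSpace

/-- Under MM-2, the composed map `φ ∘ T` is monotone on `S`:
for all `s, s' ∈ S`, `⟨s' − s, φ(T(s')) − φ(T(s))⟩ ≥ 0`. -/
theorem phi_comp_T_monotone
    {d q : ℕ}
    (Θ : Set (EuclideanSpace ℝ (Fin d)))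
    (Sset : Set (EuclideanSpace ℝ (Fin q)))
    (g : EuclideanSpace ℝ (Fin d) → EReal)
    (ψ : EuclideanSpace ℝ (Fin d) → ℝ)
    (φ : EuclideanSpace ℝ (Fin d) → EuclideanSpace ℝ (Fin q))
    (T : EuclideanSpace ℝ (Fin q) → EuclideanSpace ℝ (Fin d))
    -- g is proper (never −∞, finite somewhere), lower semicontinuous, convex, with domain Θ
    (hg_ne_bot : ∀ x, g x ≠ ⊥)
    (hg_proper : ∃ x, g x ≠ ⊤)
    (hg_lsc : LowerSemicontinuous g)
    (hg_convex : ∀ x y : EuclideanSpace ℝ (Fin d), ∀ a b : ℝ, 0 ≤ a → 0 ≤ b → a + b = 1 →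
      g (a • x + b • y) ≤ (a : EReal) * g x + (b : EReal) * g y)
    (hΘ : Θ = {x | g x ≠ ⊤})
    -- S is a convex subset of ℝ^q
    (hS_convex : Convex ℝ Sset)
    -- MM-2: for each s ∈ S, T s is the unique minimizer over ℝ^d of
    -- θ ↦ g(θ) + ψ(θ) − ⟨s, φ(θ)⟩, T maps S into Θ and is measurable
    (hT_mem : ∀ s ∈ Sset, T s ∈ Θ)
    (hT_min : ∀ s ∈ Sset, ∀ θ : EuclideanSpace ℝ (Fin d),
      g (T s) + ((ψ (T s) - ⟪s, φ (T s)⟫ : ℝ) : EReal)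
        ≤ g θ + ((ψ θ - ⟪s, φ θ⟫ : ℝ) : EReal))
    (hT_unique : ∀ s ∈ Sset, ∀ θ₀ : EuclideanSpace ℝ (Fin d),
      (∀ θ : EuclideanSpace ℝ (Fin d),
        g θ₀ + ((ψ θ₀ - ⟪s, φ θ₀⟫ : ℝ) : EReal)
          ≤ g θ + ((ψ θ - ⟪s, φ θ⟫ : ℝ) : EReal)) → θ₀ = T s)
    (hT_meas : Measurable T) :
    ∀ s ∈ Sset, ∀ s' ∈ Sset,
      ⟪s' - s, φ (T s') - φ (T s)⟫ ≥ 0 := by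
  intro s hs s' hs'
  set a := T s with ha
  set b := T s' with hb
  have hga_top : g a ≠ ⊤ := by have := hT_mem s hs; rw [hΘ] at this; exact this
  have hgb_top : g b ≠ ⊤ := by have := hT_mem s' hs'; rw [hΘ] at this; exact this
  obtain ⟨A, hA⟩ : ∃ A : ℝ, g a = (A : EReal) := by
    lift g a to ℝ using ⟨hga_top, hg_ne_bot a⟩ with A; exact ⟨A, rfl⟩
  obtain ⟨B, hB⟩ : ∃ B : ℝ, g b = (B : EReal) := by
    lift g b to ℝ using ⟨hgb_top, hg_ne_bot b⟩ with B; exact ⟨B, rfl⟩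
  have h1 := hT_min s hs b
  have h2 := hT_min s' hs' a
  rw [hA, hB, ← EReal.coe_add, ← EReal.coe_add, EReal.coe_le_coe_iff] at h1 h2
  have hexp : ⟪s' - s, φ b - φ a⟫ =
      ⟪s', φ b⟫ - ⟪s', φ a⟫ - ⟪s, φ b⟫ + ⟪s, φ a⟫ := by
    rw [inner_sub_left, inner_sub_right, inner_sub_right]; ring
  rw [hexp]; linarith
end

section
/- Assume MM-1, MM-2 and A7, let S be closed and convex, assume M := sup_{s ∈ S} ‖h(s)‖ < ∞, and set C̄ := C⋆⋆ + M·C⋆. Let s ∈ S, H ∈ ℝ^q and γ ∈ (0, v_min/(2C̄)), and set s' := Π(s + γH, B(s)) and Ē := ‖Π(s + γ h(s), B(s)) − s‖²_{B(s)} / γ². Then the one-step Lyapunov inequality holds: f(T(s')) + g(T(s')) ≤ f(T(s)) + g(T(s)) − (γ/4)(1 − 2C̄γ/v_min)·Ē + γ(1 − C̄γ/v_min)·‖H − h(s)‖²_{B(s)}. -/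
/-!
Write `u = s' - s` and `Δ = φ (T s') - φ (T s)`. Majorization (MM-1 at `T s`) together with the
minimality of `T s'` for the surrogate at `s'` (MM-2) gives
`(f + g) (T s') ≤ (f + g) (T s) + ⟨u - h s, Δ⟩`. By A7, `Δ` is `B u` up to an error of size
`C⋆ ‖u‖²` and `|⟨u, Δ⟩| ≤ C⋆⋆ ‖u‖²`, so the increment is at most
`(C̄ / v_min) ‖u‖²_B - ⟨u, h s⟩_B`. The rest is the geometry of the `B`-projection: its
variational inequality yields the descent `‖u‖²_B ≤ γ ⟨u, H⟩_B` and nonexpansiveness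
`‖Π(s + γ h s) - s'‖_B ≤ γ ‖H - h s‖_B`, whence `γ² Ē ≤ 2 ‖u‖²_B + 2 γ² ‖H - h s‖²_B`;
Young's inequality on `⟨u, H - h s⟩_B` closes the estimate.
-/

open MeasureTheory Set Matrix
open scoped Matrix

theorem Matrix.PosSemidef.isPosSemidef_toBilin' {n : Type*} [Fintype n] [DecidableEq n]
    {M : Matrix n n ℝ} (hM : M.PosSemidef) : (Matrix.toBilin' M).IsPosSemidef :=
  ⟨Matrix.isSymm_toBilin'_iff_isSymm.2 (Matrix.isHermitian_iff_isSymm.1 hM.isHermitian),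
    ⟨fun x => by
      simpa only [Matrix.toBilin'_apply', star_trivial] using hM.dotProduct_mulVec_nonneg x⟩⟩

theorem abs_dotProduct_le_sqrt_mul_sqrt {n : Type*} [Fintype n] (u v : n → ℝ) :
    |u ⬝ᵥ v| ≤ √(u ⬝ᵥ u) * √(v ⬝ᵥ v) := by
  have hu : 0 ≤ u ⬝ᵥ u := Finset.sum_nonneg fun i _ => mul_self_nonneg (u i)
  rw [← Real.sqrt_mul hu]
  apply Real.abs_le_sqrt
  simpa only [dotProduct, sq] using Finset.sum_mul_sq_le_sq_mul_sq Finset.univ u v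

theorem nonneg_of_forall_mem_Ioc_nonneg_add_mul {a b : ℝ}
    (h : ∀ l ∈ Ioc (0 : ℝ) 1, 0 ≤ a + l * b) : 0 ≤ a := by
  have hlim : Filter.Tendsto (fun l : ℝ => a + l * b) (nhdsWithin 0 (Ioi 0)) (nhds a) :=
    tendsto_nhdsWithin_of_tendsto_nhds
      ((by fun_prop : Continuous fun l : ℝ => a + l * b).tendsto' 0 a (by simp))
  exact ge_of_tendsto hlim (Filter.eventually_of_mem (Ioc_mem_nhdsGT one_pos) h)

namespace LinearMap.BilinForm

variable {V : Type*} [AddCommGroup V] [Module ℝ V] {β : LinearMap.BilinForm ℝ V}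

theorem IsSymm.apply_add_smul_self (hβ : β.IsSymm) (x y : V) (l : ℝ) :
    β (x + l • y) (x + l • y) = β x x + 2 * l * β y x + l ^ 2 * β y y := by
  simp only [map_add, map_smul, LinearMap.add_apply, LinearMap.smul_apply, smul_eq_mul]
  rw [hβ.eq x y]
  ring

theorem IsPosSemidef.two_mul_apply_le_add (hβ : β.IsPosSemidef) (x y : V) :
    2 * β x y ≤ β x x + β y y := by
  have := hβ.nonneg (x + (-1 : ℝ) • y)
  rw [hβ.apply_add_smul_self, hβ.eq y x] at this
  linarith

theorem IsSymm.apply_sub_nonneg_of_isMinOn (hβ : β.IsSymm) {S : Set V} (hS : Convex ℝ S)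
    {x p t : V} (hpS : p ∈ S) (hp : IsMinOn (fun t => β (t - x) (t - x)) S p) (ht : t ∈ S) :
    0 ≤ β (t - p) (p - x) := by
  refine nonneg_of_forall_mem_Ioc_nonneg_add_mul (b := β (t - p) (t - p) / 2) fun l hl => ?_
  have hmin := isMinOn_iff.1 hp _ (hS.add_smul_sub_mem hpS ht (Ioc_subset_Icc_self hl))
  rw [show p + l • (t - p) - x = (p - x) + l • (t - p) by abel,
    hβ.apply_add_smul_self] at hmin
  nlinarith [hl.1]

theorem IsPosSemidef.apply_sub_le_of_isMinOn (hβ : β.IsPosSemidef) {S : Set V} (hS : Convex ℝ S)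
    {x₁ x₂ p₁ p₂ : V} (hp₁S : p₁ ∈ S) (hp₁ : IsMinOn (fun t => β (t - x₁) (t - x₁)) S p₁)
    (hp₂S : p₂ ∈ S) (hp₂ : IsMinOn (fun t => β (t - x₂) (t - x₂)) S p₂) :
    β (p₁ - p₂) (p₁ - p₂) ≤ β (x₁ - x₂) (x₁ - x₂) := by
  have h₁ := hβ.apply_sub_nonneg_of_isMinOn hS hp₁S hp₁ hp₂S
  have h₂ := hβ.apply_sub_nonneg_of_isMinOn hS hp₂S hp₂ hp₁S
  rw [show p₂ - p₁ = -(p₁ - p₂) by abel, map_neg, LinearMap.neg_apply] at h₁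
  have hfirm : β (p₁ - p₂) (p₁ - p₂) ≤ β (p₁ - p₂) (x₁ - x₂) := by
    have e : β (p₁ - p₂) (p₁ - p₂) = β (p₁ - p₂) ((p₁ - x₁) - (p₂ - x₂) + (x₁ - x₂)) := by
      congr 1; abel
    rw [e, map_add, map_sub]
    linarith
  linarith [hβ.two_mul_apply_le_add (p₁ - p₂) (x₁ - x₂)]

theorem IsPosSemidef.lyapunov_bound_of_isMinOn (hβ : β.IsPosSemidef) {S : Set V}
    (hS : Convex ℝ S) {s H h s' p : V} {γ c : ℝ} (hγ : 0 < γ) (hcγ : 2 * c * γ ≤ 1) (hs : s ∈ S)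
    (hs'S : s' ∈ S) (hs' : IsMinOn (fun t => β (t - (s + γ • H)) (t - (s + γ • H))) S s')
    (hpS : p ∈ S) (hp : IsMinOn (fun t => β (t - (s + γ • h)) (t - (s + γ • h))) S p) :
    c * β (s' - s) (s' - s) - β (s' - s) h ≤
      -(γ / 4) * (1 - 2 * c * γ) * (β (p - s) (p - s) / γ ^ 2)
        + γ * (1 - c * γ) * β (H - h) (H - h) := by
  have hdescent : β (s' - s) (s' - s) ≤ γ * β (s' - s) H := by
    have := hβ.apply_sub_nonneg_of_isMinOn hS hs'S hs' hs
    rw [show s - s' = -(s' - s) by abel, show s' - (s + γ • H) = (s' - s) - γ • H by abel,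
      map_neg, LinearMap.neg_apply, map_sub (β (s' - s)), map_smul, smul_eq_mul] at this
    linarith
  have hyoung : 2 * γ * β (s' - s) (H - h) ≤ β (s' - s) (s' - s) + γ ^ 2 * β (H - h) (H - h) := by
    have := hβ.two_mul_apply_le_add (s' - s) (γ • (H - h))
    simp only [map_smul, LinearMap.smul_apply, smul_eq_mul] at this
    linarith
  have hnonexp : β (p - s') (p - s') ≤ γ ^ 2 * β (H - h) (H - h) := by
    have := hβ.apply_sub_le_of_isMinOn hS hpS hp hs'S hs'
    rw [show s + γ • h - (s + γ • H) = (-γ) • (H - h) by module] at this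
    simpa only [map_smul, LinearMap.smul_apply, smul_eq_mul, ← mul_assoc, ← sq, neg_sq]
      using this
  have hgap : β (p - s) (p - s) ≤ 2 * β (p - s') (p - s') + 2 * β (s' - s) (s' - s) := by
    have := hβ.two_mul_apply_le_add (s' - s) (p - s')
    rw [show p - s = (p - s') + (1 : ℝ) • (s' - s) by module, hβ.apply_add_smul_self]
    linarith
  have hκ : 0 ≤ 1 - 2 * c * γ := by linarith
  have hsplit : β (s' - s) h = β (s' - s) H - β (s' - s) (H - h) := by
    rw [map_sub (β (s' - s))]; ring
  rw [hsplit, ← sub_nonneg]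
  have key : -(γ / 4) * (1 - 2 * c * γ) * (β (p - s) (p - s) / γ ^ 2)
        + γ * (1 - c * γ) * β (H - h) (H - h)
        - (c * β (s' - s) (s' - s) - (β (s' - s) H - β (s' - s) (H - h)))
      = ((1 - 2 * c * γ) * (2 * β (s' - s) (s' - s) + 2 * γ ^ 2 * β (H - h) (H - h)
            - β (p - s) (p - s))
          + 2 * (β (s' - s) (s' - s) + γ ^ 2 * β (H - h) (H - h) - 2 * γ * β (s' - s) (H - h))
          + 4 * (γ * β (s' - s) H - β (s' - s) (s' - s))) / (4 * γ) := by
    field_simp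
    ring
  rw [key]
  -- the three summands are nonnegative by `hgap` with `hnonexp`, by `hyoung` and by `hdescent`
  refine div_nonneg ?_ (by positivity)
  nlinarith [mul_nonneg hκ (by linarith : 0 ≤ 2 * β (s' - s) (s' - s)
    + 2 * γ ^ 2 * β (H - h) (H - h) - β (p - s) (p - s))]

end LinearMap.BilinForm

theorem dotProduct_sub_dotProduct_le_of_linearization {n : Type*} [Fintype n]
    {B : Matrix n n ℝ} {u Δ h : n → ℝ} {C₁ C₂ M : ℝ}
    (hlin : √((Δ - B *ᵥ u) ⬝ᵥ (Δ - B *ᵥ u)) ≤ C₁ * (u ⬝ᵥ u))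
    (hbnd : |u ⬝ᵥ Δ| ≤ C₂ * (u ⬝ᵥ u)) (hh : √(h ⬝ᵥ h) ≤ M) :
    u ⬝ᵥ Δ - h ⬝ᵥ Δ ≤ (C₂ + M * C₁) * (u ⬝ᵥ u) - h ⬝ᵥ B *ᵥ u := by
  have hrem : -(h ⬝ᵥ (Δ - B *ᵥ u)) ≤ M * (C₁ * (u ⬝ᵥ u)) :=
    (neg_le_abs _).trans <| (abs_dotProduct_le_sqrt_mul_sqrt _ _).trans <|
      mul_le_mul hh hlin (Real.sqrt_nonneg _) ((Real.sqrt_nonneg _).trans hh)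
  rw [dotProduct_sub] at hrem
  linarith [le_abs_self (u ⬝ᵥ Δ)]

theorem coe_add_le_of_majorize_minimize {X n : Type*} [Fintype n] {f ψ : X → ℝ}
    {g : X → EReal} {φ : X → n → ℝ} {τ θ : X} {m s' : n → ℝ}
    (hgτ : g τ ≠ ⊤) (hgτ' : g τ ≠ ⊥) (hgθ : g θ ≠ ⊤) (hgθ' : g θ ≠ ⊥)
    (hmaj : f θ ≤ f τ + ψ θ - ψ τ - m ⬝ᵥ (φ θ - φ τ))
    (hmin : g θ + ((ψ θ - s' ⬝ᵥ φ θ : ℝ) : EReal) ≤ g τ + ((ψ τ - s' ⬝ᵥ φ τ : ℝ) : EReal)) :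
    (f θ : EReal) + g θ ≤ f τ + g τ + (((s' - m) ⬝ᵥ (φ θ - φ τ) : ℝ) : EReal) := by
  rw [← EReal.coe_toReal hgτ hgτ', ← EReal.coe_toReal hgθ hgθ'] at hmin ⊢
  norm_cast at hmin ⊢
  simp only [sub_dotProduct, dotProduct_sub] at hmaj ⊢
  linarith

theorem fedmm_one_step_lyapunov_general
    {d q p : ℕ}
    (Θ : Set (EuclideanSpace ℝ (Fin d)))
    (Sset : Set (Fin q → ℝ))
    (g : EuclideanSpace ℝ (Fin d) → EReal)
    (ψ : EuclideanSpace ℝ (Fin d) → ℝ)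
    (φ : EuclideanSpace ℝ (Fin d) → Fin q → ℝ)
    (π : Measure (EuclideanSpace ℝ (Fin p)))
    (f : EuclideanSpace ℝ (Fin d) → ℝ)
    (barS : EuclideanSpace ℝ (Fin p) → EuclideanSpace ℝ (Fin d) → Fin q → ℝ)
    (T : (Fin q → ℝ) → EuclideanSpace ℝ (Fin d))
    (hfield : (Fin q → ℝ) → Fin q → ℝ)
    (Bmat : (Fin q → ℝ) → Matrix (Fin q) (Fin q) ℝ)
    (P : (Fin q → ℝ) → Matrix (Fin q) (Fin q) ℝ → (Fin q → ℝ))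
    (Cstar Cstarstar vmin M Cbar : ℝ)
    -- g is proper lower semicontinuous convex with domain Θ
    (hg_ne_bot : ∀ x, g x ≠ ⊥)
    (hΘ : Θ = {x | g x ≠ ⊤})
    -- S is nonempty, closed and convex
    (hS_convex : Convex ℝ Sset)
    -- MM-1
    (hMM1 : ∀ τ ∈ Θ, ∀ θ ∈ Θ,
      f θ ≤ f τ + ψ θ - ψ τ - (∫ z, barS z τ ∂π) ⬝ᵥ (φ θ - φ τ))
    -- MM-2
    (hT_mem : ∀ s ∈ Sset, T s ∈ Θ)
    (hT_min : ∀ s ∈ Sset, ∀ θ : EuclideanSpace ℝ (Fin d),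
      g (T s) + ((ψ (T s) - s ⬝ᵥ φ (T s) : ℝ) : EReal)
        ≤ g θ + ((ψ θ - s ⬝ᵥ φ θ : ℝ) : EReal))
    -- mean field h(s) = E_π[S̄(Z, T s)] − s
    (hhfield : ∀ s, hfield s = (∫ z, barS z (T s) ∂π) - s)
    -- A7: local linearization of φ ∘ T in the B(s)-geometry
    (hBmat_posdef : ∀ s ∈ Sset, (Bmat s).PosDef)
    (hA7_lin : ∀ s ∈ Sset, ∀ s' ∈ Sset,
      Real.sqrt ((φ (T s') - φ (T s) - (Bmat s).mulVec (s' - s)) ⬝ᵥ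
          (φ (T s') - φ (T s) - (Bmat s).mulVec (s' - s)))
        ≤ Cstar * ((s' - s) ⬝ᵥ (s' - s)))
    (hA7_bnd : ∀ s ∈ Sset, ∀ s' ∈ Sset,
      |(s' - s) ⬝ᵥ (φ (T s') - φ (T s))| ≤ Cstarstar * ((s' - s) ⬝ᵥ (s' - s)))
    (hvmin_pos : 0 < vmin)
    (hB_lb : ∀ s ∈ Sset, ∀ u : Fin q → ℝ, vmin * (u ⬝ᵥ u) ≤ u ⬝ᵥ (Bmat s).mulVec u)
    -- M = sup_{s ∈ S} ‖h(s)‖ < ∞ and C̄ = C⋆⋆ + M C⋆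
    (hM_bdd : BddAbove ((fun s => Real.sqrt (hfield s ⬝ᵥ hfield s)) '' Sset))
    (hM : M = sSup ((fun s => Real.sqrt (hfield s ⬝ᵥ hfield s)) '' Sset))
    (hCbar : Cbar = Cstarstar + M * Cstar)
    -- Π(·, B(s)) is the projection on S in the B(s)-geometry
    (hP_mem : ∀ shat : Fin q → ℝ, ∀ s ∈ Sset, P shat (Bmat s) ∈ Sset)
    (hP_min : ∀ shat : Fin q → ℝ, ∀ s ∈ Sset, ∀ t ∈ Sset,
      (P shat (Bmat s) - shat) ⬝ᵥ (Bmat s).mulVec (P shat (Bmat s) - shat)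
        ≤ (t - shat) ⬝ᵥ (Bmat s).mulVec (t - shat))
    -- the step
    (s : Fin q → ℝ) (hs : s ∈ Sset) (H : Fin q → ℝ)
    (γ : ℝ) (hγ0 : 0 < γ) (hγ1 : γ < vmin / (2 * Cbar)) :
    let s' := P (s + γ • H) (Bmat s)
    let Ebar := ((P (s + γ • hfield s) (Bmat s) - s) ⬝ᵥ
        (Bmat s).mulVec (P (s + γ • hfield s) (Bmat s) - s)) / γ ^ 2
    (f (T s') : EReal) + g (T s')
      ≤ (f (T s) : EReal) + g (T s)
        + ((-(γ / 4) * (1 - 2 * Cbar * γ / vmin) * Ebar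
            + γ * (1 - Cbar * γ / vmin) *
              ((H - hfield s) ⬝ᵥ (Bmat s).mulVec (H - hfield s)) : ℝ) : EReal) := by
  intro s' Ebar
  set β := Matrix.toBilin' (Bmat s) with hβ_def
  have hβ : β.IsPosSemidef := (hBmat_posdef s hs).posSemidef.isPosSemidef_toBilin'
  have hproj : ∀ x, IsMinOn (fun t => β (t - x) (t - x)) Sset (P x (Bmat s)) := fun x =>
    isMinOn_iff.2 fun t ht => by
      simpa only [hβ_def, Matrix.toBilin'_apply'] using hP_min x s hs t ht
  have hs' : s' ∈ Sset := hP_mem _ s hs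
  have hdom : ∀ t ∈ Sset, g (T t) ≠ ⊤ := fun t ht => by simpa [hΘ] using hT_mem t ht
  have hmm := coe_add_le_of_majorize_minimize (hdom s hs) (hg_ne_bot _) (hdom s' hs')
    (hg_ne_bot _) (hMM1 _ (hT_mem s hs) _ (hT_mem s' hs')) (hT_min s' hs' (T s))
  rw [show s' - ∫ z, barS z (T s) ∂π = (s' - s) - hfield s by rw [hhfield]; abel,
    sub_dotProduct] at hmm
  have hM_le : √(hfield s ⬝ᵥ hfield s) ≤ M := hM ▸ le_csSup hM_bdd ⟨s, hs, rfl⟩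
  have hlin := dotProduct_sub_dotProduct_le_of_linearization (hA7_lin s hs s' hs')
    (hA7_bnd s hs s' hs') hM_le
  rw [← hCbar] at hlin
  have hCbar_pos : 0 < 2 * Cbar := (div_pos_iff_of_pos_left hvmin_pos).1 (hγ0.trans hγ1)
  have hcγ : 2 * (Cbar / vmin) * γ ≤ 1 := by
    rw [lt_div_iff₀ hCbar_pos] at hγ1
    rw [show 2 * (Cbar / vmin) * γ = γ * (2 * Cbar) / vmin by ring, div_le_one hvmin_pos]
    exact hγ1.le
  have hquad :
      Cbar * ((s' - s) ⬝ᵥ (s' - s)) ≤ Cbar / vmin * ((s' - s) ⬝ᵥ Bmat s *ᵥ (s' - s)) := by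
    rw [div_mul_eq_mul_div, le_div_iff₀ hvmin_pos]
    nlinarith [hB_lb s hs (s' - s)]
  have hstep := hβ.lyapunov_bound_of_isMinOn (h := hfield s) hS_convex hγ0 hcγ hs hs'
    (hproj _) (hP_mem _ s hs) (hproj _)
  rw [show 2 * (Cbar / vmin) * γ = 2 * Cbar * γ / vmin by ring,
    show Cbar / vmin * γ = Cbar * γ / vmin by ring] at hstep
  have hsymm := hβ.eq (s' - s) (hfield s)
  simp only [hβ_def, Matrix.toBilin'_apply'] at hstep hsymm
  refine hmm.trans (add_le_add_right (EReal.coe_le_coe_iff.2 ?_) _)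
  simp only [Ebar]
  linarith

/-- One-step Lyapunov inequality for FedMM. Assume MM-1, MM-2 and A7,
`S` closed convex, `M := sup_{s ∈ S} ‖h(s)‖ < ∞` and `C̄ := C⋆⋆ + M C⋆`, where
`h(s) := E_π[S̄(Z, T s)] − s` is the mean field. For `s ∈ S`, `H ∈ ℝ^q` and
`γ ∈ (0, v_min/(2C̄))`, with `s' := Π(s + γH, B(s))` and
`Ē := ‖Π(s + γ h(s), B(s)) − s‖²_{B(s)} / γ²`, one has
`(f+g)(T s') ≤ (f+g)(T s) − (γ/4)(1 − 2C̄γ/v_min) Ē + γ(1 − C̄γ/v_min)‖H − h(s)‖²_{B(s)}`. -/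
theorem fedmm_one_step_lyapunov
    {d q p : ℕ}
    (Θ : Set (EuclideanSpace ℝ (Fin d)))
    (Sset : Set (Fin q → ℝ))
    (g : EuclideanSpace ℝ (Fin d) → EReal)
    (ψ : EuclideanSpace ℝ (Fin d) → ℝ)
    (φ : EuclideanSpace ℝ (Fin d) → Fin q → ℝ)
    (π : Measure (EuclideanSpace ℝ (Fin p))) [IsProbabilityMeasure π]
    (ℓ : EuclideanSpace ℝ (Fin p) → EuclideanSpace ℝ (Fin d) → ℝ)
    (f : EuclideanSpace ℝ (Fin d) → ℝ)
    (barS : EuclideanSpace ℝ (Fin p) → EuclideanSpace ℝ (Fin d) → Fin q → ℝ)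
    (T : (Fin q → ℝ) → EuclideanSpace ℝ (Fin d))
    (hfield : (Fin q → ℝ) → Fin q → ℝ)
    (Bmat : (Fin q → ℝ) → Matrix (Fin q) (Fin q) ℝ)
    (P : (Fin q → ℝ) → Matrix (Fin q) (Fin q) ℝ → (Fin q → ℝ))
    (Cstar Cstarstar vmin vmax M Cbar : ℝ)
    -- g is proper lower semicontinuous convex with domain Θ
    (hg_ne_bot : ∀ x, g x ≠ ⊥)
    (hg_proper : ∃ x, g x ≠ ⊤)
    (hg_lsc : LowerSemicontinuous g)
    (hg_convex : ∀ x y : EuclideanSpace ℝ (Fin d), ∀ a b : ℝ, 0 ≤ a → 0 ≤ b → a + b = 1 →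
      g (a • x + b • y) ≤ (a : EReal) * g x + (b : EReal) * g y)
    (hΘ : Θ = {x | g x ≠ ⊤})
    -- S is nonempty, closed and convex
    (hS_ne : Sset.Nonempty) (hS_closed : IsClosed Sset) (hS_convex : Convex ℝ Sset)
    -- f(θ) = E_π[ℓ(Z,θ)]
    (hℓ_meas : Measurable (Function.uncurry ℓ))
    (hℓ_int : ∀ θ ∈ Θ, Integrable (fun z => ℓ z θ) π)
    (hf : ∀ θ, f θ = ∫ z, ℓ z θ ∂π)
    -- MM-1
    (hbarS_meas : Measurable (Function.uncurry barS))
    (hbarS_mem : ∀ z, ∀ τ ∈ Θ, barS z τ ∈ Sset)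
    (hbarS_int : ∀ τ ∈ Θ, Integrable (fun z => barS z τ) π)
    (hmean_mem : ∀ τ ∈ Θ, (∫ z, barS z τ ∂π) ∈ Sset)
    (hMM1 : ∀ τ ∈ Θ, ∀ θ ∈ Θ,
      f θ ≤ f τ + ψ θ - ψ τ - (∫ z, barS z τ ∂π) ⬝ᵥ (φ θ - φ τ))
    -- MM-2
    (hT_mem : ∀ s ∈ Sset, T s ∈ Θ)
    (hT_min : ∀ s ∈ Sset, ∀ θ : EuclideanSpace ℝ (Fin d),
      g (T s) + ((ψ (T s) - s ⬝ᵥ φ (T s) : ℝ) : EReal)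
        ≤ g θ + ((ψ θ - s ⬝ᵥ φ θ : ℝ) : EReal))
    (hT_unique : ∀ s ∈ Sset, ∀ θ₀ : EuclideanSpace ℝ (Fin d),
      (∀ θ : EuclideanSpace ℝ (Fin d),
        g θ₀ + ((ψ θ₀ - s ⬝ᵥ φ θ₀ : ℝ) : EReal)
          ≤ g θ + ((ψ θ - s ⬝ᵥ φ θ : ℝ) : EReal)) → θ₀ = T s)
    -- mean field h(s) = E_π[S̄(Z, T s)] − s
    (hhfield : ∀ s, hfield s = (∫ z, barS z (T s) ∂π) - s)
    -- A7: local linearization of φ ∘ T in the B(s)-geometry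
    (hCstar : 0 < Cstar) (hCstarstar : 0 < Cstarstar)
    (hBmat_posdef : ∀ s ∈ Sset, (Bmat s).PosDef)
    (hA7_lin : ∀ s ∈ Sset, ∀ s' ∈ Sset,
      Real.sqrt ((φ (T s') - φ (T s) - (Bmat s).mulVec (s' - s)) ⬝ᵥ
          (φ (T s') - φ (T s) - (Bmat s).mulVec (s' - s)))
        ≤ Cstar * ((s' - s) ⬝ᵥ (s' - s)))
    (hA7_bnd : ∀ s ∈ Sset, ∀ s' ∈ Sset,
      |(s' - s) ⬝ᵥ (φ (T s') - φ (T s))| ≤ Cstarstar * ((s' - s) ⬝ᵥ (s' - s)))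
    (hvmin_pos : 0 < vmin) (hvminmax : vmin ≤ vmax)
    (hB_lb : ∀ s ∈ Sset, ∀ u : Fin q → ℝ, vmin * (u ⬝ᵥ u) ≤ u ⬝ᵥ (Bmat s).mulVec u)
    (hB_ub : ∀ s ∈ Sset, ∀ u : Fin q → ℝ, u ⬝ᵥ (Bmat s).mulVec u ≤ vmax * (u ⬝ᵥ u))
    -- M = sup_{s ∈ S} ‖h(s)‖ < ∞ and C̄ = C⋆⋆ + M C⋆
    (hM_bdd : BddAbove ((fun s => Real.sqrt (hfield s ⬝ᵥ hfield s)) '' Sset))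
    (hM : M = sSup ((fun s => Real.sqrt (hfield s ⬝ᵥ hfield s)) '' Sset))
    (hCbar : Cbar = Cstarstar + M * Cstar)
    -- Π(·, B(s)) is the projection on S in the B(s)-geometry
    (hP_mem : ∀ shat : Fin q → ℝ, ∀ s ∈ Sset, P shat (Bmat s) ∈ Sset)
    (hP_min : ∀ shat : Fin q → ℝ, ∀ s ∈ Sset, ∀ t ∈ Sset,
      (P shat (Bmat s) - shat) ⬝ᵥ (Bmat s).mulVec (P shat (Bmat s) - shat)
        ≤ (t - shat) ⬝ᵥ (Bmat s).mulVec (t - shat))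
    (hP_unique : ∀ shat : Fin q → ℝ, ∀ s ∈ Sset, ∀ t ∈ Sset,
      (∀ u ∈ Sset, (t - shat) ⬝ᵥ (Bmat s).mulVec (t - shat)
          ≤ (u - shat) ⬝ᵥ (Bmat s).mulVec (u - shat)) → t = P shat (Bmat s))
    -- the step
    (s : Fin q → ℝ) (hs : s ∈ Sset) (H : Fin q → ℝ)
    (γ : ℝ) (hγ0 : 0 < γ) (hγ1 : γ < vmin / (2 * Cbar)) :
    let s' := P (s + γ • H) (Bmat s)
    let Ebar := ((P (s + γ • hfield s) (Bmat s) - s) ⬝ᵥ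
        (Bmat s).mulVec (P (s + γ • hfield s) (Bmat s) - s)) / γ ^ 2
    (f (T s') : EReal) + g (T s')
      ≤ (f (T s) : EReal) + g (T s)
        + ((-(γ / 4) * (1 - 2 * Cbar * γ / vmin) * Ebar
            + γ * (1 - Cbar * γ / vmin) *
              ((H - hfield s) ⬝ᵥ (Bmat s).mulVec (H - hfield s)) : ℝ) : EReal) :=
  fedmm_one_step_lyapunov_general Θ Sset g ψ φ π f barS T hfield Bmat P Cstar Cstarstar vmin M Cbar
    hg_ne_bot hΘ hS_convex hMM1 hT_mem hT_min hhfield hBmat_posdef hA7_lin hA7_bnd hvmin_pos hB_lb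
    hM_bdd hM hCbar hP_mem hP_min s hs H γ hγ0 hγ1
end

section
/- Let s ∈ ℝ^q, ω ≥ 0 and p ∈ (0,1]. Let X be a random vector in ℝ^q with E[X] = s and E[‖X − s‖²] ≤ ω‖s‖², and let U be a Bernoulli random variable with success probability p, independent of X. Then the random vector X̃ := (U/p)·X satisfies E[X̃] = s and E[‖X̃ − s‖²] ≤ ω_p‖s‖², where ω_p := ω + ((1−p)/p)(ω + 1). -/
/-! With `W = U / p` one has `E[W] = 1`, `E[W²] = 1 / p` and `E[(W - 1)²] = 1 / p - 1`.
Independence gives `E[W • X] = E[W] • E[X] = s` and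
`E‖W • X - s‖² = E[W²] E‖X - s‖² + E[(W - 1)²] ‖s‖² ≤ (ω / p + 1 / p - 1) ‖s‖² = ω_p ‖s‖²`. -/

open MeasureTheory ProbabilityTheory

section ZeroOne

variable {Ω : Type*} {U : Ω → ℝ}

lemma eq_indicator_of_zero_or_one (hU : ∀ a, U a = 0 ∨ U a = 1) :
    U = {a | U a = 1}.indicator 1 := by
  funext a
  rcases hU a with h | h <;> simp [h]

variable [MeasurableSpace Ω] {μ : Measure Ω}

lemma memLp_of_zero_or_one [IsFiniteMeasure μ] (hm : Measurable U)
    (hU : ∀ a, U a = 0 ∨ U a = 1) (r : ENNReal) : MemLp U r μ := by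
  rw [eq_indicator_of_zero_or_one hU]
  exact memLp_indicator_const r (hm (measurableSet_singleton 1)) 1 (Or.inr (measure_ne_top _ _))

lemma integral_eq_measureReal_of_zero_or_one (hm : Measurable U)
    (hU : ∀ a, U a = 0 ∨ U a = 1) : ∫ a, U a ∂μ = μ.real {a | U a = 1} := by
  conv_lhs => rw [eq_indicator_of_zero_or_one hU]
  exact integral_indicator_one (hm (measurableSet_singleton 1))

lemma integral_comp_of_zero_or_one [IsProbabilityMeasure μ] (hm : Measurable U)
    (hU : ∀ a, U a = 0 ∨ U a = 1) (g : ℝ → ℝ) :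
    ∫ a, g (U a) ∂μ = g 0 + (g 1 - g 0) * μ.real {a | U a = 1} := by
  have h_affine : ∀ a, g (U a) = g 0 + (g 1 - g 0) * U a := fun a => by
    rcases hU a with h | h <;> simp [h]
  simp_rw [h_affine]
  rw [integral_add (integrable_const _)
      (((memLp_of_zero_or_one hm hU 1).integrable le_rfl).const_mul _),
    integral_const_mul, integral_eq_measureReal_of_zero_or_one hm hU]
  simp

end ZeroOne

lemma norm_smul_sub_sq {E : Type*} [NormedAddCommGroup E] [InnerProductSpace ℝ E]
    (w : ℝ) (x m : E) :
    ‖w • x - m‖ ^ 2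
      = w ^ 2 * ‖x - m‖ ^ 2 + 2 * (w * (w - 1)) * inner ℝ m (x - m) + (w - 1) ^ 2 * ‖m‖ ^ 2 := by
  have h : w • x - m = w • (x - m) + (w - 1) • m := by
    rw [smul_sub, sub_smul, one_smul]; abel
  rw [h, norm_add_sq_real, real_inner_smul_left, real_inner_smul_right, norm_smul, norm_smul,
    mul_pow, mul_pow, Real.norm_eq_abs, sq_abs, Real.norm_eq_abs, sq_abs, real_inner_comm]
  ring

lemma ProbabilityTheory.IndepFun.integrable_and_integral_comp_mul_comp {Ω α β : Type*}
    [MeasurableSpace Ω] [MeasurableSpace α] [MeasurableSpace β] {μ : Measure Ω}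
    {W : Ω → α} {X : Ω → β} (hWX : W ⟂ᵢ[μ] X) {f : α → ℝ} {g : β → ℝ}
    (hf : Measurable f) (hg : Measurable g) (hfW : Integrable (fun a => f (W a)) μ)
    (hgX : Integrable (fun a => g (X a)) μ) :
    Integrable (fun a => f (W a) * g (X a)) μ ∧
      ∫ a, f (W a) * g (X a) ∂μ = (∫ a, f (W a) ∂μ) * ∫ a, g (X a) ∂μ :=
  ⟨(hWX.comp hf hg).integrable_mul hfW hgX,
    (hWX.comp hf hg).integral_fun_mul_eq_mul_integral hfW.1 hgX.1⟩

/-- The cross term of `norm_smul_sub_sq` vanishes: by independence it factors through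
`∫ (X - μ[X]) = 0`. -/
lemma ProbabilityTheory.IndepFun.integral_norm_smul_sub_integral_sq {Ω E : Type*}
    [MeasurableSpace Ω] {μ : Measure Ω} [IsProbabilityMeasure μ]
    [NormedAddCommGroup E] [InnerProductSpace ℝ E] [CompleteSpace E] [MeasurableSpace E]
    [BorelSpace E] {W : Ω → ℝ} {X : Ω → E} (hWX : W ⟂ᵢ[μ] X) (hW : MemLp W 2 μ)
    (hX : Integrable X μ) (hX2 : Integrable (fun a => ‖X a - μ[X]‖ ^ 2) μ) :
    ∫ a, ‖W a • X a - μ[X]‖ ^ 2 ∂μ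
      = (∫ a, W a ^ 2 ∂μ) * (∫ a, ‖X a - μ[X]‖ ^ 2 ∂μ)
        + (∫ a, (W a - 1) ^ 2 ∂μ) * ‖μ[X]‖ ^ 2 := by
  set m := μ[X]
  have hY : Integrable (fun a => X a - m) μ := hX.sub (integrable_const m)
  have h_centered : ∫ a, inner ℝ m (X a - m) ∂μ = 0 := by
    rw [integral_inner hY, integral_sub hX (integrable_const m)]
    simp [m]
  obtain ⟨h_int₁, h_eq₁⟩ := hWX.integrable_and_integral_comp_mul_comp
    (f := fun w => w ^ 2) (g := fun x => ‖x - m‖ ^ 2) (by fun_prop) (by fun_prop)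
    hW.integrable_sq hX2
  obtain ⟨h_int₂, h_eq₂⟩ := hWX.integrable_and_integral_comp_mul_comp
    (f := fun w => 2 * (w * (w - 1))) (g := fun x => inner ℝ m (x - m)) (by fun_prop)
    (by fun_prop)
    (((hW.integrable_sq.sub (hW.integrable one_le_two)).const_mul 2).congr
      (ae_of_all _ fun a => by simp only [Pi.sub_apply]; ring))
    (hY.const_inner m)
  have h_int₃ : Integrable (fun a => (W a - 1) ^ 2 * ‖m‖ ^ 2) μ :=
    ((hW.sub (memLp_const 1)).integrable_sq).mul_const _
  simp_rw [norm_smul_sub_sq]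
  rw [integral_add _ h_int₃, integral_add h_int₁ h_int₂, h_eq₁, h_eq₂, h_centered,
    integral_mul_const]
  · ring
  · exact h_int₁.add h_int₂

theorem partial_participation_as_compression_general
    {q : ℕ} {Ω : Type*} [MeasurableSpace Ω] (Pr : Measure Ω) [IsProbabilityMeasure Pr]
    (s : EuclideanSpace ℝ (Fin q)) (ω p : ℝ) (hp0 : 0 < p)
    (X : Ω → EuclideanSpace ℝ (Fin q)) (U : Ω → ℝ)
    (hU_meas : Measurable U)
    (hX_int : Integrable X Pr)
    (hX_sq_int : Integrable (fun a => ‖X a - s‖ ^ 2) Pr)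
    (hX_mean : ∫ a, X a ∂Pr = s)
    (hX_var : ∫ a, ‖X a - s‖ ^ 2 ∂Pr ≤ ω * ‖s‖ ^ 2)
    -- U is Bernoulli with success probability p, independent of X
    (hU_01 : ∀ a, U a = 0 ∨ U a = 1)
    (hU_p : Pr {a | U a = 1} = ENNReal.ofReal p)
    (hUX_indep : IndepFun U X Pr) :
    (∫ a, (U a / p) • X a ∂Pr = s)
      ∧ (∫ a, ‖(U a / p) • X a - s‖ ^ 2 ∂Pr
          ≤ (ω + (1 - p) / p * (ω + 1)) * ‖s‖ ^ 2) := by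
  have h_moment (g : ℝ → ℝ) : ∫ a, g (U a / p) ∂Pr = g 0 + (g (1 / p) - g 0) * p := by
    rw [integral_comp_of_zero_or_one hU_meas hU_01 (fun u => g (u / p)), measureReal_def, hU_p,
      ENNReal.toReal_ofReal hp0.le, zero_div]
  have hWX : IndepFun (fun a => U a / p) X Pr :=
    hUX_indep.comp (measurable_id.div_const p) measurable_id
  have hW : MemLp (fun a => U a / p) 2 Pr := by
    simpa only [div_eq_mul_inv] using (memLp_of_zero_or_one hU_meas hU_01 2).mul_const p⁻¹
  have h_mean : ∫ a, U a / p ∂Pr = 1 := by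
    rw [h_moment fun w => w]
    field_simp
    simp
  have h_sq : ∫ a, (U a / p) ^ 2 ∂Pr = 1 / p := by
    rw [h_moment fun w => w ^ 2]
    field_simp
    ring
  have h_sq_sub_one : ∫ a, (U a / p - 1) ^ 2 ∂Pr = 1 / p - 1 := by
    rw [h_moment fun w => (w - 1) ^ 2]
    field_simp
    ring
  refine ⟨?_, ?_⟩
  · rw [hWX.integral_fun_smul_eq_smul_integral hW.1 hX_int.1, h_mean, one_smul, hX_mean]
  · have h_split := hWX.integral_norm_smul_sub_integral_sq hW hX_int (hX_mean ▸ hX_sq_int)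
    rw [hX_mean, h_sq, h_sq_sub_one] at h_split
    calc _ = 1 / p * ∫ a, ‖X a - s‖ ^ 2 ∂Pr + (1 / p - 1) * ‖s‖ ^ 2 := h_split
      _ ≤ 1 / p * (ω * ‖s‖ ^ 2) + (1 / p - 1) * ‖s‖ ^ 2 := by gcongr
      _ = _ := by field_simp; ring

/-- Let `s ∈ ℝ^q`, `ω ≥ 0` and `p ∈ (0,1]`. Let `X` be a random vector
with `E[X] = s` and `E[‖X − s‖²] ≤ ω‖s‖²`, and let `U` be a Bernoulli random variable with
success probability `p`, independent of `X`. Then `X̃ := (U/p) X` satisfies `E[X̃] = s` and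
`E[‖X̃ − s‖²] ≤ ω_p ‖s‖²`, where `ω_p := ω + ((1−p)/p)(ω + 1)`. -/
theorem partial_participation_as_compression
    {q : ℕ} {Ω : Type*} [MeasurableSpace Ω] (Pr : Measure Ω) [IsProbabilityMeasure Pr]
    (s : EuclideanSpace ℝ (Fin q)) (ω p : ℝ) (hω : 0 ≤ ω) (hp0 : 0 < p) (hp1 : p ≤ 1)
    (X : Ω → EuclideanSpace ℝ (Fin q)) (U : Ω → ℝ)
    (hX_meas : Measurable X) (hU_meas : Measurable U)
    (hX_int : Integrable X Pr)
    (hX_sq_int : Integrable (fun a => ‖X a - s‖ ^ 2) Pr)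
    (hX_mean : ∫ a, X a ∂Pr = s)
    (hX_var : ∫ a, ‖X a - s‖ ^ 2 ∂Pr ≤ ω * ‖s‖ ^ 2)
    -- U is Bernoulli with success probability p, independent of X
    (hU_01 : ∀ a, U a = 0 ∨ U a = 1)
    (hU_p : Pr {a | U a = 1} = ENNReal.ofReal p)
    (hUX_indep : IndepFun U X Pr) :
    (∫ a, (U a / p) • X a ∂Pr = s)
      ∧ (∫ a, ‖(U a / p) • X a - s‖ ^ 2 ∂Pr
          ≤ (ω + (1 - p) / p * (ω + 1)) * ‖s‖ ^ 2) :=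
  partial_participation_as_compression_general Pr s ω p hp0 X U hU_meas hX_int hX_sq_int hX_mean
    hX_var hU_01 hU_p hUX_indep
end

section
/- On a probability space, fix s, V ∈ ℝ^q, m ∈ ℝ^q and set h := m − s. Let X be a random vector with E[X] = m and E[‖X − m‖²] ≤ σ², and set Δ := X − s − V. Let Q be a random vector such that, conditionally on X, E[Q | X] = Δ and E[‖Q − Δ‖² | X] ≤ ω_p‖Δ‖² for some ω_p ≥ 0. For α ∈ [0,1] set V' := V + α Q. Then E[‖V' − h‖²] ≤ (1 − α)‖V − h‖² + α σ² + α(α(1 + ω_p) − 1)·E[‖Δ‖²]. -/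
/-!
Write `V' - h = ((1 - α) • (V - h) + α • (X - m)) + α • (Q - Δ)`. The first summand is a
function of `X`, while `Q - Δ` has zero conditional mean given `X`, so the two summands are
orthogonal in `L²`. The first is expanded by
`‖(1 - α) • a + α • b‖² = (1 - α) ‖a‖² + α ‖b‖² - α (1 - α) ‖b - a‖²`, where `b - a = Δ`;
the second is controlled by the conditional variance bound on the compression.
-/

open MeasureTheory

open scoped RealInnerProductSpace

section

variable {E : Type*} [NormedAddCommGroup E] [InnerProductSpace ℝ E]

theorem norm_one_sub_smul_add_smul_sq (a b : E) (α : ℝ) :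
    ‖(1 - α) • a + α • b‖ ^ 2
      = (1 - α) * ‖a‖ ^ 2 + α * ‖b‖ ^ 2 - α * (1 - α) * ‖b - a‖ ^ 2 := by
  rw [norm_add_sq_real, norm_sub_sq_real, norm_smul, norm_smul, real_inner_smul_left,
    real_inner_smul_right, real_inner_comm, Real.norm_eq_abs, Real.norm_eq_abs, mul_pow, mul_pow,
    sq_abs, sq_abs]
  ring

namespace MeasureTheory

variable {Ω : Type*} {m m₀ : MeasurableSpace Ω} {μ : Measure Ω}

theorem MemLp.integrable_inner {f g : Ω → E} (hf : MemLp f 2 μ) (hg : MemLp g 2 μ) :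
    Integrable (fun ω => ⟪f ω, g ω⟫) μ :=
  memLp_one_iff_integrable.1 ((innerSL ℝ).memLp_of_bilin 1 hf hg)

theorem integral_norm_one_sub_smul_add_smul_sq {f g : Ω → E} (hf : MemLp f 2 μ)
    (hg : MemLp g 2 μ) (α : ℝ) :
    ∫ ω, ‖(1 - α) • f ω + α • g ω‖ ^ 2 ∂μ
      = (1 - α) * ∫ ω, ‖f ω‖ ^ 2 ∂μ + α * ∫ ω, ‖g ω‖ ^ 2 ∂μ
        - α * (1 - α) * ∫ ω, ‖g ω - f ω‖ ^ 2 ∂μ := by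
  have hf2 := (hf.integrable_norm_pow two_ne_zero).const_mul (1 - α)
  have hg2 := (hg.integrable_norm_pow two_ne_zero).const_mul α
  have hgf2 : Integrable (fun ω => α * (1 - α) * ‖g ω - f ω‖ ^ 2) μ :=
    ((hg.sub hf).integrable_norm_pow two_ne_zero).const_mul _
  simp only [norm_one_sub_smul_add_smul_sq]
  rw [integral_sub ?_ hgf2, integral_add hf2 hg2, integral_const_mul, integral_const_mul,
    integral_const_mul]
  exact hf2.add hg2

theorem integral_inner_eq_zero_of_condExp_eq_zero [CompleteSpace E] (hm : m ≤ m₀)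
    [SigmaFinite (μ.trim hm)] {f g : Ω → E} (hf : StronglyMeasurable[m] f)
    (hfg : Integrable (fun ω => ⟪f ω, g ω⟫) μ) (hg : Integrable g μ) (hg0 : μ[g | m] =ᵐ[μ] 0) :
    ∫ ω, ⟪f ω, g ω⟫ ∂μ = 0 := by
  rw [← integral_condExp hm]
  have hpull := condExp_bilin_of_stronglyMeasurable_left (innerSL ℝ) hf hfg hg
  calc ∫ ω, (μ[fun ω => ⟪f ω, g ω⟫ | m]) ω ∂μ = ∫ _ : Ω, (0 : ℝ) ∂μ := by
        refine integral_congr_ae (hpull.trans ?_)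
        filter_upwards [hg0] with ω hω
        simp [hω]
    _ = 0 := integral_zero _ _

theorem integral_norm_add_smul_sq_of_condExp_eq_zero [CompleteSpace E] [IsFiniteMeasure μ]
    (hm : m ≤ m₀) {f g : Ω → E} (hf_meas : StronglyMeasurable[m] f) (hf : MemLp f 2 μ)
    (hg : MemLp g 2 μ) (hg0 : μ[g | m] =ᵐ[μ] 0) (c : ℝ) :
    ∫ ω, ‖f ω + c • g ω‖ ^ 2 ∂μ = ∫ ω, ‖f ω‖ ^ 2 ∂μ + c ^ 2 * ∫ ω, ‖g ω‖ ^ 2 ∂μ := by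
  have hf2 := hf.integrable_norm_pow two_ne_zero
  have hg2 := (hg.integrable_norm_pow two_ne_zero).const_mul (c ^ 2)
  have hfg := hf.integrable_inner hg
  have hfg2 : Integrable (fun ω => 2 * (c * ⟪f ω, g ω⟫)) μ := (hfg.const_mul c).const_mul 2
  have hcross := integral_inner_eq_zero_of_condExp_eq_zero hm hf_meas hfg
    (hg.integrable one_le_two) hg0
  simp only [norm_add_sq_real, real_inner_smul_right, norm_smul, mul_pow, Real.norm_eq_abs,
    sq_abs]
  rw [integral_add ?_ hg2, integral_add hf2 hfg2, integral_const_mul, integral_const_mul,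
    integral_const_mul, hcross, mul_zero, mul_zero, add_zero]
  exact hf2.add hfg2

theorem integral_le_of_condExp_le (hm : m ≤ m₀) [SigmaFinite (μ.trim hm)] {f g : Ω → ℝ}
    (hg : Integrable g μ) (hfg : μ[f | m] ≤ᵐ[μ] g) : ∫ ω, f ω ∂μ ≤ ∫ ω, g ω ∂μ := by
  rw [← integral_condExp hm]
  exact integral_mono_ae integrable_condExp hg hfg

theorem condExp_sub_eq_zero_of_condExp_eq [CompleteSpace E] (hm : m ≤ m₀)
    [SigmaFinite (μ.trim hm)] {g d : Ω → E} (hg : Integrable g μ)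
    (hd_meas : StronglyMeasurable[m] d) (hd : Integrable d μ) (hgd : μ[g | m] =ᵐ[μ] d) :
    μ[g - d | m] =ᵐ[μ] 0 := by
  filter_upwards [condExp_sub hg hd m, hgd] with ω hsub hω
  simp [hsub, hω, condExp_of_stronglyMeasurable hm hd_meas hd]

end MeasureTheory

end

theorem control_variate_one_step_general
    {q : ℕ} {Ω : Type*} [MeasurableSpace Ω] (Pr : Measure Ω) [IsProbabilityMeasure Pr]
    (s V m : EuclideanSpace ℝ (Fin q))
    (σ ωp α : ℝ) (hα0 : 0 ≤ α)
    (X Q : Ω → EuclideanSpace ℝ (Fin q))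
    (hX_meas : Measurable X) (hQ_meas : Measurable Q)
    (hX_sq_int : Integrable (fun a => ‖X a - m‖ ^ 2) Pr)
    (hX_var : ∫ a, ‖X a - m‖ ^ 2 ∂Pr ≤ σ ^ 2)
    (hQ_sq_int : Integrable (fun a => ‖Q a‖ ^ 2) Pr)
    -- conditionally on X, Q is an unbiased compression of Δ := X − s − V
    -- with relative variance ω_p
    (hQ_mean : Pr[Q | MeasurableSpace.comap X inferInstance]
        =ᵐ[Pr] fun a => X a - s - V)
    (hQ_var : ∀ᵐ a ∂Pr,
      (Pr[fun a' => ‖Q a' - (X a' - s - V)‖ ^ 2 | MeasurableSpace.comap X inferInstance]) a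
        ≤ ωp * ‖X a - s - V‖ ^ 2) :
    ∫ a, ‖(V + α • Q a) - (m - s)‖ ^ 2 ∂Pr
      ≤ (1 - α) * ‖V - (m - s)‖ ^ 2 + α * σ ^ 2
        + α * (α * (1 + ωp) - 1) * ∫ a, ‖X a - s - V‖ ^ 2 ∂Pr := by
  set 𝔪 := MeasurableSpace.comap X inferInstance
  have hm : 𝔪 ≤ _ := hX_meas.comap_le
  have hX𝔪 : Measurable[𝔪] X := comap_measurable X
  have hXm : MemLp (fun a => X a - m) 2 Pr :=
    (memLp_two_iff_integrable_sq_norm (by fun_prop)).2 hX_sq_int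
  have hdiff : ∀ a, X a - m - (V - (m - s)) = X a - s - V := fun a => by abel
  have hΔ : MemLp (fun a => X a - s - V) 2 Pr := by
    simpa only [Pi.sub_def, hdiff] using hXm.sub (memLp_const (V - (m - s)))
  have hQ : MemLp Q 2 Pr := (memLp_two_iff_integrable_sq_norm (by fun_prop)).2 hQ_sq_int
  have hnoise := condExp_sub_eq_zero_of_condExp_eq hm (hQ.integrable one_le_two)
    ((hX𝔪.sub_const s).sub_const V).stronglyMeasurable (hΔ.integrable one_le_two) hQ_mean
  have hpyth := integral_norm_add_smul_sq_of_condExp_eq_zero hm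
    (f := fun a => (1 - α) • (V - (m - s)) + α • (X a - m))
    ((hX𝔪.sub_const m).const_smul α |>.const_add _).stronglyMeasurable
    ((memLp_const ((1 - α) • (V - (m - s)))).add (hXm.const_smul α)) (hQ.sub hΔ) hnoise α
  have hconv := integral_norm_one_sub_smul_add_smul_sq (memLp_const (V - (m - s))) hXm α
  have hvar : ∫ a, ‖Q a - (X a - s - V)‖ ^ 2 ∂Pr ≤ ωp * ∫ a, ‖X a - s - V‖ ^ 2 ∂Pr :=
    (integral_le_of_condExp_le hm ((hΔ.integrable_norm_pow two_ne_zero).const_mul ωp)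
      hQ_var).trans_eq (integral_const_mul _ _)
  have hsplit : ∀ a, V + α • Q a - (m - s)
      = ((1 - α) • (V - (m - s)) + α • (X a - m)) + α • (Q a - (X a - s - V)) := fun a => by
    module
  simp only [hsplit, Pi.sub_apply] at hpyth ⊢
  simp only [hpyth, hconv, hdiff, integral_const, probReal_univ, one_smul]
  linarith [mul_le_mul_of_nonneg_left hX_var hα0, mul_le_mul_of_nonneg_left hvar (sq_nonneg α)]

/-- One-step control-variate recursion at a single agent. `V` is the
current control variate, `X` a stochastic oracle of the mean statistic `m` (with variance
at most `σ²`), `Δ := X − s − V` the corrected innovation, `Q` an unbiased compression of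
`Δ` (conditionally on `X`) with relative variance `ω_p`, and `V' := V + α Q` with
`α ∈ [0,1]`. Then `E[‖V' − h‖²] ≤ (1−α)‖V − h‖² + ασ² + α(α(1+ω_p) − 1) E[‖Δ‖²]`,
where `h := m − s`. -/
theorem control_variate_one_step
    {q : ℕ} {Ω : Type*} [MeasurableSpace Ω] (Pr : Measure Ω) [IsProbabilityMeasure Pr]
    (s V m : EuclideanSpace ℝ (Fin q))
    (σ ωp α : ℝ) (hσ : 0 ≤ σ) (hωp : 0 ≤ ωp) (hα0 : 0 ≤ α) (hα1 : α ≤ 1)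
    (X Q : Ω → EuclideanSpace ℝ (Fin q))
    (hX_meas : Measurable X) (hQ_meas : Measurable Q)
    (hX_int : Integrable X Pr)
    (hX_sq_int : Integrable (fun a => ‖X a - m‖ ^ 2) Pr)
    (hX_mean : ∫ a, X a ∂Pr = m)
    (hX_var : ∫ a, ‖X a - m‖ ^ 2 ∂Pr ≤ σ ^ 2)
    (hQ_int : Integrable Q Pr)
    (hQ_sq_int : Integrable (fun a => ‖Q a‖ ^ 2) Pr)
    -- conditionally on X, Q is an unbiased compression of Δ := X − s − V
    -- with relative variance ω_p
    (hQ_mean : Pr[Q | MeasurableSpace.comap X inferInstance]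
        =ᵐ[Pr] fun a => X a - s - V)
    (hQ_var : ∀ᵐ a ∂Pr,
      (Pr[fun a' => ‖Q a' - (X a' - s - V)‖ ^ 2 | MeasurableSpace.comap X inferInstance]) a
        ≤ ωp * ‖X a - s - V‖ ^ 2) :
    ∫ a, ‖(V + α • Q a) - (m - s)‖ ^ 2 ∂Pr
      ≤ (1 - α) * ‖V - (m - s)‖ ^ 2 + α * σ ^ 2
        + α * (α * (1 + ωp) - 1) * ∫ a, ‖X a - s - V‖ ^ 2 ∂Pr :=
  control_variate_one_step_general Pr s V m σ ωp α hα0 X Q hX_meas hQ_meas hX_sq_int hX_var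
    hQ_sq_int hQ_mean hQ_var
end
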